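/- arXiv:2304.13600 — 3 statements merged into one kernel-verified Lean document; each statement's English description precedes it below -/
import Mathlib

section
/- Let n ≥ 2, let W be a finite-dimensional real vector space, and let ρ : GL_n(ℝ) → GL(W) be a group homomorphism whose matrix coefficients (with respect to some basis of W) are polynomial functions of the n² matrix entries. Let L ⊂ W be a compact subset such that ρ(u) '' L = L for every upper unitriangular matrix u ∈ GL_n(ℝ) (i.e., u_{ii} = 1 for all i and u_{ij} = 0 for i > j). Then ρ(u) w = w for every w ∈ L and every upper unitriangular matrix u. -/
open scoped Pointwise Matrix
open MeasureTheory

noncomputable section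

/-- The convex body `{x}`. -/
def pointBody {V : Type*} [NormedAddCommGroup V] [NormedSpace ℝ V] (x : V) : ConvexBody V :=
  ⟨{x}, convex_singleton x, isCompact_singleton, Set.singleton_nonempty x⟩

/-- A Minkowski valuation: finitely additive with respect to unions and intersections of
convex bodies whose union is again convex, with Minkowski addition in the target. -/
def IsMinkowskiVal {V W : Type*} [NormedAddCommGroup V] [NormedSpace ℝ V]
    [NormedAddCommGroup W] [NormedSpace ℝ W] (Φ : ConvexBody V → ConvexBody W) : Prop :=
  ∀ K L M N : ConvexBody V,
    (M : Set V) = (K : Set V) ∪ (L : Set V) →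
    (N : Set V) = (K : Set V) ∩ (L : Set V) →
    Φ M + Φ N = Φ K + Φ L

/-- Translation invariance of a map on convex bodies. -/
def IsTransInv {V W : Type*} [NormedAddCommGroup V] [NormedSpace ℝ V]
    [NormedAddCommGroup W] [NormedSpace ℝ W] (Φ : ConvexBody V → ConvexBody W) : Prop :=
  ∀ (K : ConvexBody V) (x : V), Φ (K + pointBody x) = Φ K

/-- Image of a convex body under a linear map between finite-dimensional normed spaces. -/
def ConvexBody.lmap {V W : Type*} [NormedAddCommGroup V] [NormedSpace ℝ V]
    [FiniteDimensional ℝ V] [NormedAddCommGroup W] [NormedSpace ℝ W]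
    (f : V →ₗ[ℝ] W) (K : ConvexBody V) : ConvexBody W :=
  ⟨f '' (K : Set V), K.convex.linear_image f,
    K.isCompact.image f.continuous_of_finiteDimensional, K.nonempty.image f⟩

abbrev Rn (n : ℕ) : Type := Fin n → ℝ

/-- The standard action of `SL_n(ℝ)` on `ℝⁿ`. -/
def stdRep {n : ℕ} (T : Matrix.SpecialLinearGroup (Fin n) ℝ) : Rn n →ₗ[ℝ] Rn n :=
  Matrix.mulVecLin (T : Matrix (Fin n) (Fin n) ℝ)

/-- The inverse-transpose (dual) action of `SL_n(ℝ)` on `ℝⁿ`. -/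
def dualRep {n : ℕ} (T : Matrix.SpecialLinearGroup (Fin n) ℝ) : Rn n →ₗ[ℝ] Rn n :=
  Matrix.mulVecLin ((T : Matrix (Fin n) (Fin n) ℝ)ᵀ)⁻¹

/-- `SL_n(ℝ)` carries the topology induced from the space of `n × n` matrices. -/
instance {n : ℕ} : TopologicalSpace (Matrix.SpecialLinearGroup (Fin n) ℝ) :=
  TopologicalSpace.induced (fun T => (T : Matrix (Fin n) (Fin n) ℝ)) inferInstance

lemma strictUpper_pow_entry {n : ℕ} (N : Matrix (Fin n) (Fin n) ℝ)
    (hN : ∀ i j : Fin n, (j : ℕ) ≤ (i : ℕ) → N i j = 0) :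
    ∀ (k : ℕ) (i j : Fin n), (j : ℕ) < (i : ℕ) + k → (N ^ k) i j = 0 := by
  intro k
  induction k with
  | zero =>
    intro i j h
    rw [pow_zero]
    exact Matrix.one_apply_ne (by intro he; subst he; omega)
  | succ k ih =>
    intro i j h
    rw [pow_succ, Matrix.mul_apply]
    apply Finset.sum_eq_zero
    intro l _
    by_cases hl : (l : ℕ) < (i : ℕ) + k
    · rw [ih i l hl, zero_mul]
    · rw [hN l j (by omega), mul_zero]

/-- **Lemma (trivial action of unipotent matrices on invariant compact sets).** Let
`ρ : GL_n(ℝ) → GL(W)` be a polynomial representation and `L ⊆ W` compact with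
`ρ(u) L = L` for every upper unitriangular `u`. Then `ρ(u) w = w` for all `w ∈ L`
and all upper unitriangular `u`. -/
theorem stmt10 {n : ℕ} (hn : 2 ≤ n) {W : Type*} [NormedAddCommGroup W] [NormedSpace ℝ W]
    [FiniteDimensional ℝ W]
    (ρ : Matrix.GeneralLinearGroup (Fin n) ℝ →* (W ≃ₗ[ℝ] W))
    {ι : Type} [Fintype ι] (b : Module.Basis ι ℝ W)
    (hpoly : ∀ i j : ι, ∃ p : MvPolynomial (Fin n × Fin n) ℝ,
      ∀ T : Matrix.GeneralLinearGroup (Fin n) ℝ,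
        b.repr (ρ T (b j)) i =
          MvPolynomial.eval (fun kl => (T : Matrix (Fin n) (Fin n) ℝ) kl.1 kl.2) p)
    (L : Set W) (hLcompact : IsCompact L)
    (hL : ∀ u : Matrix.GeneralLinearGroup (Fin n) ℝ,
      (∀ i : Fin n, (u : Matrix (Fin n) (Fin n) ℝ) i i = 1) →
      (∀ i j : Fin n, j < i → (u : Matrix (Fin n) (Fin n) ℝ) i j = 0) →
      ⇑(ρ u) '' L = L) :
    ∀ w ∈ L, ∀ u : Matrix.GeneralLinearGroup (Fin n) ℝ,
      (∀ i : Fin n, (u : Matrix (Fin n) (Fin n) ℝ) i i = 1) →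
      (∀ i j : Fin n, j < i → (u : Matrix (Fin n) (Fin n) ℝ) i j = 0) →
      ρ u w = w := by
  intro w hw u hu1 hu2
  choose p hp using hpoly
  set M : Matrix (Fin n) (Fin n) ℝ := (u : Matrix (Fin n) (Fin n) ℝ) with hMdef
  set N : Matrix (Fin n) (Fin n) ℝ := M - 1 with hNdef
  have hN : ∀ i j : Fin n, (j : ℕ) ≤ (i : ℕ) → N i j = 0 := by
    intro i j hij
    rcases eq_or_lt_of_le hij with h | h
    · have : i = j := Fin.ext h.symm
      subst this
      simp [hNdef, Matrix.sub_apply, hu1 i]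
    · have hij' : j < i := h
      simp [hNdef, Matrix.sub_apply, hu2 i j hij', Matrix.one_apply_ne (Fin.ne_of_gt hij')]
  -- N^k = 0 for n ≤ k
  have hNpow : ∀ k : ℕ, n ≤ k → N ^ k = 0 := by
    intro k hk
    ext i j
    exact strictUpper_pow_entry N hN k i j (by omega)
  have hM1N : M = N + 1 := by rw [hNdef]; abel
  -- binomial expansion
  have key : ∀ m : ℕ, M ^ m = ∑ k ∈ Finset.range n, (m.choose k) • N ^ k := by
    intro m
    rw [hM1N, (Commute.one_right N).add_pow]
    have e1 : ∀ k ∈ Finset.range (m + 1),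
        N ^ k * 1 ^ (m - k) * (m.choose k : Matrix (Fin n) (Fin n) ℝ)
          = (m.choose k) • N ^ k := by
      intro k _
      rw [one_pow, mul_one, ← nsmul_eq_mul']
    rw [Finset.sum_congr rfl e1]
    have e2 : ∑ k ∈ Finset.range (m + 1), (m.choose k) • N ^ k
        = ∑ k ∈ Finset.range (max (m + 1) n), (m.choose k) • N ^ k := by
      refine Finset.sum_subset (Finset.range_subset_range.2 (le_max_left _ _)) ?_
      intro k _ hk
      rw [Nat.choose_eq_zero_of_lt (by simp [Finset.mem_range] at hk; omega), zero_smul]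
    have e3 : ∑ k ∈ Finset.range n, (m.choose k) • N ^ k
        = ∑ k ∈ Finset.range (max (m + 1) n), (m.choose k) • N ^ k := by
      refine Finset.sum_subset (Finset.range_subset_range.2 (le_max_right _ _)) ?_
      intro k _ hk
      rw [hNpow k (by simp [Finset.mem_range] at hk; omega), smul_zero]
    rw [e2, ← e3]
  -- entry polynomials
  set q : Fin n → Fin n → Polynomial ℝ := fun i j =>
    ∑ k ∈ Finset.range n, Polynomial.C ((N ^ k) i j / (k.factorial : ℝ)) * descPochhammer ℝ k
    with hqdef
  have hq : ∀ (m : ℕ) (i j : Fin n), (M ^ m) i j = (q i j).eval (m : ℝ) := by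
    intro m i j
    rw [key m, hqdef]
    simp only [Polynomial.eval_finset_sum, Polynomial.eval_mul, Polynomial.eval_C,
      descPochhammer_eval_eq_descFactorial, Matrix.sum_apply, Matrix.smul_apply]
    refine Finset.sum_congr rfl fun k _ => ?_
    rw [Nat.descFactorial_eq_factorial_mul_choose, nsmul_eq_mul]
    have hfac : (k.factorial : ℝ) ≠ 0 := Nat.cast_ne_zero.2 k.factorial_ne_zero
    push_cast
    field_simp
  -- coordinates of ρ T w
  have hrepr : ∀ (T : Matrix.GeneralLinearGroup (Fin n) ℝ) (i : ι),
      b.repr (ρ T w) i = ∑ j, b.repr w j * b.repr (ρ T (b j)) i := by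
    intro T i
    conv_lhs => rw [← b.sum_repr w]
    rw [map_sum, map_sum]
    simp [Finsupp.smul_apply, smul_eq_mul]
  set Pw : ι → MvPolynomial (Fin n × Fin n) ℝ := fun i =>
    ∑ j, MvPolynomial.C (b.repr w j) * p i j with hPwdef
  have hPw : ∀ (T : Matrix.GeneralLinearGroup (Fin n) ℝ) (i : ι),
      b.repr (ρ T w) i
        = MvPolynomial.eval (fun kl => (T : Matrix (Fin n) (Fin n) ℝ) kl.1 kl.2) (Pw i) := by
    intro T i
    rw [hrepr T i, hPwdef]
    simp only [map_sum, MvPolynomial.eval_mul, MvPolynomial.eval_C]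
    exact Finset.sum_congr rfl fun j _ => by rw [hp i j T]
  -- one-variable polynomial
  set Q : ι → Polynomial ℝ := fun i => MvPolynomial.aeval (fun kl => q kl.1 kl.2) (Pw i)
    with hQdef
  have hQ : ∀ (m : ℕ) (i : ι), b.repr (ρ (u ^ m) w) i = (Q i).eval (m : ℝ) := by
    intro m i
    rw [hPw (u ^ m) i]
    have hcoe : ((u ^ m : Matrix.GeneralLinearGroup (Fin n) ℝ) : Matrix (Fin n) (Fin n) ℝ)
        = M ^ m := Units.val_pow_eq_pow_val u m
    have hfun : (fun kl : Fin n × Fin n =>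
        ((u ^ m : Matrix.GeneralLinearGroup (Fin n) ℝ) : Matrix (Fin n) (Fin n) ℝ) kl.1 kl.2)
        = fun kl => (q kl.1 kl.2).eval (m : ℝ) := by
      funext kl
      rw [hcoe]
      exact hq m kl.1 kl.2
    rw [hfun, hQdef]
    beta_reduce
    -- eval of aeval
    rw [MvPolynomial.aeval_def]
    have hcl := MvPolynomial.eval₂_comp_left (Polynomial.evalRingHom (m : ℝ))
      (algebraMap ℝ (Polynomial ℝ)) (fun kl => q kl.1 kl.2) (Pw i)
    have hcomp : (Polynomial.evalRingHom (m : ℝ)).comp (algebraMap ℝ (Polynomial ℝ))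
        = RingHom.id ℝ := by
      ext a
      simp
    rw [hcomp] at hcl
    rw [show Polynomial.eval ((m : ℝ)) (MvPolynomial.eval₂ (algebraMap ℝ (Polynomial ℝ))
        (fun kl => q kl.1 kl.2) (Pw i)) = (Polynomial.evalRingHom (m : ℝ))
        (MvPolynomial.eval₂ (algebraMap ℝ (Polynomial ℝ)) (fun kl => q kl.1 kl.2) (Pw i)) from rfl,
      hcl]
    rfl
  -- membership
  have hmem : ∀ m : ℕ, ρ (u ^ m) w ∈ L := by
    intro m
    induction m with
    | zero => simpa using hw
    | succ m ih =>
      have hstep : ρ (u ^ (m + 1)) w = ρ u (ρ (u ^ m) w) := by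
        rw [pow_succ', map_mul]
        rfl
      rw [hstep, ← hL u hu1 hu2]
      exact Set.mem_image_of_mem _ ih
  -- boundedness, constancy
  have hconst : ∀ i : ι, (Q i).eval (1 : ℝ) = (Q i).eval 0 := by
    intro i
    have hcont : Continuous fun y : W => b.repr y i := by
      have := (b.coord i).continuous_of_finiteDimensional
      exact this
    obtain ⟨C, hC⟩ := hLcompact.exists_bound_of_continuousOn hcont.continuousOn
    have hB : ∀ m : ℕ, |(Q i).eval (m : ℝ)| ≤ C := by
      intro m
      rw [← hQ m i]
      simpa [Real.norm_eq_abs] using hC _ (hmem m)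
    by_cases hdeg : 0 < (Q i).degree
    · exfalso
      have ht := ((Q i).abs_tendsto_atTop hdeg).comp
        (tendsto_natCast_atTop_atTop (R := ℝ))
      obtain ⟨m, hm⟩ := (ht.eventually_gt_atTop C).exists
      exact absurd (hB m) (not_le.2 hm)
    · push_neg at hdeg
      rw [Polynomial.eq_C_of_degree_le_zero hdeg]
      simp
  -- conclude
  have hfinal : ∀ i : ι, b.repr (ρ u w) i = b.repr w i := by
    intro i
    have e1 : b.repr (ρ u w) i = (Q i).eval ((1 : ℕ) : ℝ) := by
      simpa using hQ 1 i
    have e0 : b.repr w i = (Q i).eval ((0 : ℕ) : ℝ) := by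
      simpa using hQ 0 i
    rw [e1, e0]
    push_cast
    exact hconst i
  have : b.repr (ρ u w) = b.repr w := Finsupp.ext hfinal
  exact b.repr.injective this
end
end

section
/- Let n ≥ 2, p ≥ 1, and let μ be a finite Borel measure on the unit sphere S^{p−1} ⊂ ℝ^p satisfying ∫_{S^{p−1}} u dμ(u) = 0. For a convex body K ∈ K(ℝ^n) and a linear map ξ : ℝ^n → ℝ^p, define H_K(ξ) = ∫_{S^{p−1}} h_K(ξᵀ u) dμ(u), where ξᵀ : ℝ^p → ℝ^n is the transpose and h_K is the support function of K. Then: (a) H_K is sublinear (positively homogeneous and subadditive) on the space Hom(ℝ^n, ℝ^p), hence it is the support function of a unique convex body M_μ K in the dual space Hom(ℝ^p, ℝ^n) (paired with Hom(ℝ^n, ℝ^p) via the trace pairing (S, T) ↦ tr(T∘S)); (b) M_μ(K + L) = M_μ(K) + M_μ(L) (Minkowski sum) for all convex bodies K, L; (c) K ↦ M_μ K is a translation-invariant, continuous Minkowski valuation satisfying M_μ(T '' K) = {T ∘ S : S ∈ M_μ K} for all T ∈ SL_n(ℝ). -/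
open scoped Pointwise Matrix
open MeasureTheory

noncomputable section

/-- The diagonal action of a linear map on `q`-tuples of vectors. -/
def diagMap {V : Type*} [AddCommGroup V] [Module ℝ V] (q : ℕ) (f : V →ₗ[ℝ] V) :
    (Fin q → V) →ₗ[ℝ] (Fin q → V) :=
  LinearMap.pi fun i => f ∘ₗ LinearMap.proj i

/-- The support function of a convex body in `ℝⁿ` with respect to the standard pairing. -/
def suppFn {n : ℕ} (K : ConvexBody (Rn n)) (y : Rn n) : ℝ :=
  sSup ((fun x => ∑ i, x i * y i) '' (K : Set (Rn n)))

/-- Left composition with an `n × n` matrix `T`, acting on `Hom(ℝ^p, ℝⁿ)` realized as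
`n × p` matrices: `E ↦ T * E`. -/
def matLeftMul {n p : ℕ} (T : Matrix (Fin n) (Fin n) ℝ) :
    (Fin n → Fin p → ℝ) →ₗ[ℝ] (Fin n → Fin p → ℝ) where
  toFun E := fun i j => ∑ l, T i l * E l j
  map_add' E F := by
    funext i j
    simp [mul_add, Finset.sum_add_distrib]
  map_smul' c E := by
    funext i j
    simp only [Pi.smul_apply, smul_eq_mul, RingHom.id_apply]
    rw [Finset.mul_sum]
    exact Finset.sum_congr rfl fun l _ => by ring

/-- `H_K(ξ) = ∫_{S^{p-1}} h_K(ξᵀ u) dμ(u)`, where `ξ : ℝⁿ → ℝ^p` is realized as a `p × n`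
matrix (a `p`-tuple of vectors in `ℝⁿ`). -/
def meanWidthFn {n p : ℕ} (μ : MeasureTheory.Measure (Fin p → ℝ))
    (K : ConvexBody (Rn n)) (ξ : Fin p → Rn n) : ℝ :=
  ∫ u, suppFn K (fun i => ∑ j, ξ j i * u j) ∂μ


set_option linter.unusedSectionVars false
set_option maxHeartbeats 1000000

namespace MW
variable {W : Type*} [TopologicalSpace W]

theorem bdd (s : Set W) (hs : IsCompact s) {φ : W → ℝ} (hφ : Continuous φ) :
    BddAbove (φ '' s) := (hs.image hφ).bddAbove

theorem le_sSup' {s : Set W} (hs : IsCompact s) {φ : W → ℝ} (hφ : Continuous φ)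
    {x : W} (hx : x ∈ s) : φ x ≤ sSup (φ '' s) :=
  le_csSup (bdd s hs hφ) ⟨x, hx, rfl⟩

theorem exists_sSup {s : Set W} (hs : IsCompact s) (hne : s.Nonempty) {φ : W → ℝ}
    (hφ : Continuous φ) : ∃ x ∈ s, sSup (φ '' s) = φ x :=
  hs.exists_sSup_image_eq hne hφ.continuousOn

theorem sSup_le' {s : Set W} (hne : s.Nonempty) {φ : W → ℝ} {a : ℝ}
    (h : ∀ x ∈ s, φ x ≤ a) : sSup (φ '' s) ≤ a :=
  csSup_le (hne.image φ) (by rintro _ ⟨x, hx, rfl⟩; exact h x hx)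

theorem sSup_add [AddCommMonoid W] [ContinuousAdd W] {s t : Set W}
    (hs : IsCompact s) (hsne : s.Nonempty) (ht : IsCompact t) (htne : t.Nonempty)
    {φ : W → ℝ} (hφ : Continuous φ) (hadd : ∀ x y, φ (x + y) = φ x + φ y) :
    sSup (φ '' (s + t)) = sSup (φ '' s) + sSup (φ '' t) := by
  apply le_antisymm
  · apply sSup_le' (hsne.add htne)
    rintro x hx
    rcases Set.mem_add.1 hx with ⟨a, ha, b, hb, rfl⟩
    rw [hadd]
    exact add_le_add (le_sSup' hs hφ ha) (le_sSup' ht hφ hb)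
  · obtain ⟨a, ha, hae⟩ := exists_sSup hs hsne hφ
    obtain ⟨b, hb, hbe⟩ := exists_sSup ht htne hφ
    rw [hae, hbe, ← hadd]
    exact le_sSup' (hs.add ht) hφ (Set.add_mem_add ha hb)

/-! suppFn lemmas -/
variable {n : ℕ}

theorem dot_continuous (y : Rn n) : Continuous (fun x : Rn n => ∑ i, x i * y i) := by
  exact continuous_finset_sum _ fun i _ => (continuous_apply i).mul continuous_const

theorem dot_le_suppFn (K : ConvexBody (Rn n)) (y : Rn n) {x : Rn n} (hx : x ∈ (K : Set (Rn n))) :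
    ∑ i, x i * y i ≤ suppFn K y :=
  le_sSup' K.isCompact (dot_continuous y) hx

theorem exists_suppFn (K : ConvexBody (Rn n)) (y : Rn n) :
    ∃ x ∈ (K : Set (Rn n)), suppFn K y = ∑ i, x i * y i :=
  exists_sSup K.isCompact K.nonempty (dot_continuous y)

theorem suppFn_le (K : ConvexBody (Rn n)) (y : Rn n) {a : ℝ}
    (h : ∀ x ∈ (K : Set (Rn n)), ∑ i, x i * y i ≤ a) : suppFn K y ≤ a :=
  sSup_le' K.nonempty h

theorem suppFn_zero (K : ConvexBody (Rn n)) : suppFn K (0 : Rn n) = 0 := by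
  obtain ⟨x, hx, he⟩ := exists_suppFn K 0
  simpa using he

theorem suppFn_smul (K : ConvexBody (Rn n)) (y : Rn n) {c : ℝ} (hc : 0 ≤ c) :
    suppFn K (fun i => c * y i) = c * suppFn K y := by
  apply le_antisymm
  · apply suppFn_le
    intro x hx
    calc ∑ i, x i * (c * y i) = c * ∑ i, x i * y i := by
          rw [Finset.mul_sum]; exact Finset.sum_congr rfl fun i _ => by ring
      _ ≤ c * suppFn K y := mul_le_mul_of_nonneg_left (dot_le_suppFn K y hx) hc
  · obtain ⟨x, hx, he⟩ := exists_suppFn K y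
    rw [he]
    calc c * ∑ i, x i * y i = ∑ i, x i * (c * y i) := by
          rw [Finset.mul_sum]; exact Finset.sum_congr rfl fun i _ => by ring
      _ ≤ _ := dot_le_suppFn K _ hx

theorem suppFn_add_le (K : ConvexBody (Rn n)) (y z : Rn n) :
    suppFn K (fun i => y i + z i) ≤ suppFn K y + suppFn K z := by
  apply suppFn_le
  intro x hx
  calc ∑ i, x i * (y i + z i) = (∑ i, x i * y i) + ∑ i, x i * z i := by
        rw [← Finset.sum_add_distrib]; exact Finset.sum_congr rfl fun i _ => by ring
    _ ≤ _ := add_le_add (dot_le_suppFn K y hx) (dot_le_suppFn K z hx)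

theorem dot_add (a b y : Rn n) :
    (∑ i, (a + b) i * y i) = (∑ i, a i * y i) + ∑ i, b i * y i := by
  rw [← Finset.sum_add_distrib]
  exact Finset.sum_congr rfl fun i _ => by simp only [Pi.add_apply]; ring

theorem suppFn_body_add (K L : ConvexBody (Rn n)) (y : Rn n) :
    suppFn (K + L) y = suppFn K y + suppFn L y := by
  have : ((K + L : ConvexBody (Rn n)) : Set (Rn n)) = (K : Set (Rn n)) + L := rfl
  unfold suppFn
  rw [this]
  exact sSup_add K.isCompact K.nonempty L.isCompact L.nonempty (dot_continuous y)
    (fun a b => dot_add a b y)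

/-- A nonnegative coordinatewise bound for a convex body. -/
theorem exists_bound (K : ConvexBody (Rn n)) :
    ∃ R : ℝ, 0 ≤ R ∧ ∀ x ∈ (K : Set (Rn n)), ∀ i, |x i| ≤ R := by
  obtain ⟨R, hR⟩ := K.isCompact.isBounded.exists_norm_le
  obtain ⟨x₀, hx₀⟩ := K.nonempty
  refine ⟨R, le_trans (norm_nonneg x₀) (hR x₀ hx₀), fun x hx i => ?_⟩
  calc |x i| = ‖x i‖ := rfl
    _ ≤ ‖x‖ := norm_le_pi_norm x i
    _ ≤ R := hR x hx

theorem suppFn_le_suppFn (K L : ConvexBody (Rn n)) {d : ℝ}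
    (h : ∀ x ∈ (K : Set (Rn n)), ∃ z ∈ (L : Set (Rn n)), dist x z ≤ d) (y : Rn n) :
    suppFn K y ≤ suppFn L y + d * ∑ i, |y i| := by
  obtain ⟨x, hx, he⟩ := exists_suppFn K y
  obtain ⟨z, hz, hdz⟩ := h x hx
  rw [he]
  have key : ∑ i, x i * y i ≤ (∑ i, z i * y i) + d * ∑ i, |y i| := by
    have : ∑ i, x i * y i - ∑ i, z i * y i = ∑ i, (x i - z i) * y i := by
      rw [← Finset.sum_sub_distrib]; exact Finset.sum_congr rfl fun i _ => by ring
    rw [← sub_le_iff_le_add', this, Finset.mul_sum]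
    apply Finset.sum_le_sum
    intro i _
    calc (x i - z i) * y i ≤ |(x i - z i) * y i| := le_abs_self _
      _ = |x i - z i| * |y i| := abs_mul _ _
      _ ≤ d * |y i| := by
          apply mul_le_mul_of_nonneg_right _ (abs_nonneg _)
          calc |x i - z i| = dist (x i) (z i) := (Real.dist_eq _ _).symm
            _ ≤ dist x z := dist_le_pi_dist x z i
            _ ≤ d := hdz
  exact key.trans (add_le_add_left (dot_le_suppFn L y hz) _)

theorem suppFn_lipschitz (K : ConvexBody (Rn n)) {R : ℝ} (hR0 : 0 ≤ R)
    (hR : ∀ x ∈ (K : Set (Rn n)), ∀ i, |x i| ≤ R) (y z : Rn n) :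
    suppFn K y ≤ suppFn K z + R * ∑ i, |y i - z i| := by
  obtain ⟨x, hx, he⟩ := exists_suppFn K y
  rw [he]
  have hdiff : ∑ i, x i * (y i - z i) ≤ R * ∑ i, |y i - z i| := by
    rw [Finset.mul_sum]
    apply Finset.sum_le_sum
    intro i _
    calc x i * (y i - z i) ≤ |x i * (y i - z i)| := le_abs_self _
      _ = |x i| * |y i - z i| := abs_mul _ _
      _ ≤ R * |y i - z i| := mul_le_mul_of_nonneg_right (hR x hx i) (abs_nonneg _)
  calc ∑ i, x i * y i = (∑ i, x i * z i) + ∑ i, x i * (y i - z i) := by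
        rw [← Finset.sum_add_distrib]; exact Finset.sum_congr rfl fun i _ => by ring
    _ ≤ suppFn K z + R * ∑ i, |y i - z i| := add_le_add (dot_le_suppFn K z hx) hdiff

theorem abs_suppFn_le (K : ConvexBody (Rn n)) {R : ℝ} (hR0 : 0 ≤ R)
    (hR : ∀ x ∈ (K : Set (Rn n)), ∀ i, |x i| ≤ R) (y : Rn n) :
    |suppFn K y| ≤ R * ∑ i, |y i| := by
  rw [abs_le]
  constructor
  · obtain ⟨x, hx⟩ := K.nonempty
    calc -(R * ∑ i, |y i|) = ∑ i, -(R * |y i|) := by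
          rw [Finset.mul_sum, ← Finset.sum_neg_distrib]
      _ ≤ ∑ i, x i * y i := by
          apply Finset.sum_le_sum
          intro i _
          have h1 : |x i * y i| ≤ R * |y i| := by
            rw [abs_mul]; exact mul_le_mul_of_nonneg_right (hR x hx i) (abs_nonneg _)
          linarith [neg_abs_le (x i * y i)]
      _ ≤ suppFn K y := dot_le_suppFn K y hx
  · have := suppFn_lipschitz K hR0 hR y 0
    simpa [suppFn_zero] using this

theorem suppFn_continuous (K : ConvexBody (Rn n)) : Continuous (suppFn K) := by
  obtain ⟨R, hR0, hR⟩ := exists_bound K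
  have hlip : ∀ y z : Rn n, dist (suppFn K y) (suppFn K z) ≤ (R * n) * dist y z := by
    intro y z
    rw [Real.dist_eq, abs_le]
    have hsum : ∀ y z : Rn n, (∑ i, |y i - z i|) ≤ n * dist y z := by
      intro y z
      calc (∑ i, |y i - z i|) ≤ ∑ _i : Fin n, dist y z :=
            Finset.sum_le_sum fun i _ => by
              calc |y i - z i| = dist (y i) (z i) := (Real.dist_eq _ _).symm
                _ ≤ dist y z := dist_le_pi_dist y z i
        _ = n * dist y z := by simp [Finset.sum_const, mul_comm]
    constructor
    · have := suppFn_lipschitz K hR0 hR z y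
      have h2 : R * ∑ i, |z i - y i| ≤ R * n * dist y z := by
        rw [mul_assoc]
        apply mul_le_mul_of_nonneg_left _ hR0
        simpa [dist_comm] using hsum z y
      linarith
    · have := suppFn_lipschitz K hR0 hR y z
      have h2 : R * ∑ i, |y i - z i| ≤ R * n * dist y z := by
        rw [mul_assoc]
        exact mul_le_mul_of_nonneg_left (hsum y z) hR0
      linarith
  have : LipschitzWith (R * n).toNNReal (suppFn K) := by
    apply LipschitzWith.of_dist_le_mul
    intro y z
    rw [Real.coe_toNNReal _ (mul_nonneg hR0 (Nat.cast_nonneg n))]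
    exact hlip y z
  exact this.continuous

end MW


namespace MW

section Measure
variable {n p : ℕ} (μ : MeasureTheory.Measure (Fin p → ℝ)) [IsFiniteMeasure μ]

theorem ae_bound (hsph : μ ({u : Fin p → ℝ | ∑ j, (u j) ^ 2 = 1}ᶜ) = 0) : ∀ᵐ u ∂μ, ∀ j, |u j| ≤ 1 := by
  have h : ∀ᵐ u ∂μ, ∑ j, (u j) ^ 2 = 1 := by
    rw [MeasureTheory.ae_iff]
    exact hsph
  filter_upwards [h] with u hu j
  rw [← sq_le_one_iff_abs_le_one, ← hu]
  exact Finset.single_le_sum (f := fun j => (u j) ^ 2) (fun j _ => sq_nonneg _)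
    (Finset.mem_univ j)

theorem transpose_continuous (ξ : Fin p → Rn n) :
    Continuous (fun u : Fin p → ℝ => (fun i => ∑ j, ξ j i * u j : Rn n)) :=
  continuous_pi fun i => continuous_finset_sum _ fun j _ => continuous_const.mul (continuous_apply j)

theorem integrable_suppFn (hsph : μ ({u : Fin p → ℝ | ∑ j, (u j) ^ 2 = 1}ᶜ) = 0)
    (K : ConvexBody (Rn n)) (ξ : Fin p → Rn n) :
    Integrable (fun u => suppFn K (fun i => ∑ j, ξ j i * u j)) μ := by
  obtain ⟨R, hR0, hR⟩ := exists_bound K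
  refine ⟨((suppFn_continuous K).comp (transpose_continuous ξ)).aestronglyMeasurable, ?_⟩
  apply MeasureTheory.HasFiniteIntegral.of_bounded (C := R * ∑ i, ∑ j, |ξ j i|)
  filter_upwards [ae_bound μ hsph] with u hu
  calc ‖suppFn K (fun i => ∑ j, ξ j i * u j)‖
      = |suppFn K (fun i => ∑ j, ξ j i * u j)| := rfl
    _ ≤ R * ∑ i, |∑ j, ξ j i * u j| := abs_suppFn_le K hR0 hR _
    _ ≤ R * ∑ i, ∑ j, |ξ j i| := by
        apply mul_le_mul_of_nonneg_left _ hR0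
        apply Finset.sum_le_sum
        intro i _
        calc |∑ j, ξ j i * u j| ≤ ∑ j, |ξ j i * u j| := Finset.abs_sum_le_sum_abs _ _
          _ ≤ ∑ j, |ξ j i| := by
              apply Finset.sum_le_sum
              intro j _
              rw [abs_mul]
              calc |ξ j i| * |u j| ≤ |ξ j i| * 1 :=
                    mul_le_mul_of_nonneg_left (hu j) (abs_nonneg _)
                _ = |ξ j i| := mul_one _

theorem mw_smul (K : ConvexBody (Rn n)) {c : ℝ} (hc : 0 ≤ c) (ξ : Fin p → Rn n) :
    meanWidthFn μ K (c • ξ) = c * meanWidthFn μ K ξ := by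
  unfold meanWidthFn
  rw [← integral_const_mul]
  apply integral_congr_ae
  filter_upwards with u
  have h1 : (fun i => ∑ j, (c • ξ) j i * u j : Rn n)
      = fun i => c * ∑ j, ξ j i * u j := by
    funext i
    rw [Finset.mul_sum]
    exact Finset.sum_congr rfl fun j _ => by simp [mul_assoc]
  rw [h1, suppFn_smul K _ hc]

theorem mw_add_le (hsph : μ ({u : Fin p → ℝ | ∑ j, (u j) ^ 2 = 1}ᶜ) = 0) (K : ConvexBody (Rn n)) (ξ₁ ξ₂ : Fin p → Rn n) :
    meanWidthFn μ K (ξ₁ + ξ₂) ≤ meanWidthFn μ K ξ₁ + meanWidthFn μ K ξ₂ := by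
  unfold meanWidthFn
  rw [← integral_add (integrable_suppFn μ hsph K ξ₁) (integrable_suppFn μ hsph K ξ₂)]
  apply integral_mono (integrable_suppFn μ hsph K (ξ₁ + ξ₂))
    ((integrable_suppFn μ hsph K ξ₁).add (integrable_suppFn μ hsph K ξ₂))
  intro u
  have h1 : (fun i => ∑ j, (ξ₁ j i + ξ₂ j i) * u j : Rn n)
      = fun i => (∑ j, ξ₁ j i * u j) + ∑ j, ξ₂ j i * u j := by
    funext i
    rw [← Finset.sum_add_distrib]
    exact Finset.sum_congr rfl fun j _ => by ring
  simp only [Pi.add_apply]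
  rw [h1]
  exact suppFn_add_le K _ _

theorem mw_body_add (hsph : μ ({u : Fin p → ℝ | ∑ j, (u j) ^ 2 = 1}ᶜ) = 0) (K L : ConvexBody (Rn n)) (ξ : Fin p → Rn n) :
    meanWidthFn μ (K + L) ξ = meanWidthFn μ K ξ + meanWidthFn μ L ξ := by
  unfold meanWidthFn
  rw [← integral_add (integrable_suppFn μ hsph K ξ) (integrable_suppFn μ hsph L ξ)]
  apply integral_congr_ae
  filter_upwards with u
  exact suppFn_body_add K L _

theorem mw_zero (K : ConvexBody (Rn n)) : meanWidthFn μ K 0 = 0 := by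
  unfold meanWidthFn
  have h1 : ∀ u : Fin p → ℝ, suppFn K (fun i => ∑ j, (0 : Fin p → Rn n) j i * u j) = 0 := by
    intro u
    have : (fun i => ∑ j, (0 : Fin p → Rn n) j i * u j : Rn n) = 0 := by
      funext i; simp
    rw [this, suppFn_zero]
  simp only [h1, integral_zero]

end Measure
end MW


namespace MW

/-! Pairing and basis matrices. -/

def delta {a b : ℕ} (k : Fin a) (l : Fin b) : Fin a → Fin b → ℝ :=
  fun k' l' => if k' = k ∧ l' = l then 1 else 0

def pairM {n p : ℕ} (E : Fin n → Fin p → ℝ) (ξ : Fin p → Rn n) : ℝ :=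
  ∑ i, ∑ j, E i j * ξ j i

theorem matrix_decomp {a b : ℕ} (x : Fin a → Fin b → ℝ) :
    x = ∑ k : Fin a, ∑ l : Fin b, x k l • delta k l := by
  funext k' l'
  simp only [Finset.sum_apply, Pi.smul_apply, delta, smul_eq_mul, mul_ite, mul_one, mul_zero,
    ite_and]
  rw [Finset.sum_eq_single k' (fun k _ hk => by
    have h : ¬ k' = k := fun h => hk h.symm
    simp [h]) (fun h => absurd (Finset.mem_univ k') h)]
  simp

theorem linear_eq_sum {a b : ℕ} (g : (Fin a → Fin b → ℝ) →ₗ[ℝ] ℝ) (x : Fin a → Fin b → ℝ) :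
    g x = ∑ k : Fin a, ∑ l : Fin b, x k l * g (delta k l) := by
  conv_lhs => rw [matrix_decomp x]
  rw [map_sum]
  apply Finset.sum_congr rfl
  intro k _
  rw [map_sum]
  apply Finset.sum_congr rfl
  intro l _
  rw [_root_.map_smul, smul_eq_mul]

theorem pairM_continuous {n p : ℕ} (ξ : Fin p → Rn n) :
    Continuous (fun E : Fin n → Fin p → ℝ => pairM E ξ) := by
  apply continuous_finset_sum
  intro i _
  apply continuous_finset_sum
  intro j _
  exact ((continuous_apply j).comp (continuous_apply i : Continuous fun E : Fin n → Fin p → ℝ => E i)).mul continuous_const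

end MW


namespace MW
section Body
variable {n p : ℕ} (μ : MeasureTheory.Measure (Fin p → ℝ)) [IsFiniteMeasure μ]

/-- The candidate mean width body, as a set. -/
def mwSet (K : ConvexBody (Rn n)) : Set (Fin n → Fin p → ℝ) :=
  {E | ∀ ξ : Fin p → Rn n, pairM E ξ ≤ meanWidthFn μ K ξ}

theorem exists_pair_eq (hsph : μ ({u : Fin p → ℝ | ∑ j, (u j) ^ 2 = 1}ᶜ) = 0)
    (K : ConvexBody (Rn n)) (ξ₀ : Fin p → Rn n) :
    ∃ E ∈ mwSet μ K, pairM E ξ₀ = meanWidthFn μ K ξ₀ := by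
  set N : (Fin p → Rn n) → ℝ := meanWidthFn μ K with hN
  have hN0 : N 0 = 0 := mw_zero μ K
  have N_hom : ∀ c : ℝ, 0 < c → ∀ ξ, N (c • ξ) = c * N ξ := fun c hc ξ => mw_smul μ K hc.le ξ
  have N_add : ∀ ξ₁ ξ₂, N (ξ₁ + ξ₂) ≤ N ξ₁ + N ξ₂ := fun ξ₁ ξ₂ => mw_add_le μ hsph K ξ₁ ξ₂
  have H : ∀ c : ℝ, c • ξ₀ = 0 → c • (N ξ₀) = 0 := by
    intro c hc
    rcases eq_or_ne c 0 with h | h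
    · rw [h, zero_smul]
    · rcases smul_eq_zero.1 hc with h' | h'
      · exact absurd h' h
      · rw [h', hN0, smul_zero]
  set f := LinearPMap.mkSpanSingleton' (σ := RingHom.id ℝ) ξ₀ (N ξ₀) H with hf'
  have hf : ∀ x : f.domain, f x ≤ N x := by
    rintro ⟨x, hx⟩
    rcases Submodule.mem_span_singleton.1 hx with ⟨c, rfl⟩
    rw [show f ⟨c • ξ₀, hx⟩ = c • N ξ₀ from LinearPMap.mkSpanSingleton'_apply ξ₀ (N ξ₀) H c hx]
    rcases lt_trichotomy c 0 with h | h | h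
    · have h1 : N (c • ξ₀ + (-c) • ξ₀) ≤ N (c • ξ₀) + N ((-c) • ξ₀) := N_add _ _
      have h2 : c • ξ₀ + (-c) • ξ₀ = 0 := by rw [← add_smul]; simp
      have h3 : N ((-c) • ξ₀) = (-c) * N ξ₀ := N_hom (-c) (by linarith) ξ₀
      rw [h2, hN0] at h1
      rw [smul_eq_mul]
      linarith
    · subst h
      simp [hN0]
    · rw [N_hom c h, smul_eq_mul]
  obtain ⟨g, hg_eq, hg_le⟩ := exists_extension_of_le_sublinear f N N_hom N_add hf
  have hgx : g ξ₀ = N ξ₀ := by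
    have h1 := hg_eq ⟨ξ₀, Submodule.mem_span_singleton_self ξ₀⟩
    rw [h1]
    exact LinearPMap.mkSpanSingleton'_apply_self (σ := RingHom.id ℝ) ξ₀ (N ξ₀) H _
  refine ⟨fun i j => g (delta j i), ?_, ?_⟩
  · intro ξ
    have : pairM (fun i j => g (delta j i)) ξ = g ξ := by
      rw [linear_eq_sum g ξ, pairM, Finset.sum_comm]
      exact Finset.sum_congr rfl fun j _ => Finset.sum_congr rfl fun i _ => mul_comm _ _
    rw [this]
    exact hg_le ξ
  · have : pairM (fun i j => g (delta j i)) ξ₀ = g ξ₀ := by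
      rw [linear_eq_sum g ξ₀, pairM, Finset.sum_comm]
      exact Finset.sum_congr rfl fun j _ => Finset.sum_congr rfl fun i _ => mul_comm _ _
    rw [this, hgx]

theorem pairM_smul_add {E F : Fin n → Fin p → ℝ} (a b : ℝ) (ξ : Fin p → Rn n) :
    pairM (a • E + b • F) ξ = a * pairM E ξ + b * pairM F ξ := by
  unfold pairM
  rw [Finset.mul_sum, Finset.mul_sum, ← Finset.sum_add_distrib]
  apply Finset.sum_congr rfl
  intro i _
  rw [Finset.mul_sum, Finset.mul_sum, ← Finset.sum_add_distrib]
  apply Finset.sum_congr rfl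
  intro j _
  simp only [Pi.add_apply, Pi.smul_apply, smul_eq_mul]
  ring

theorem pairM_delta (E : Fin n → Fin p → ℝ) (j : Fin p) (i : Fin n) :
    pairM E (delta j i) = E i j := by
  unfold pairM delta
  have h1 : ∀ i' : Fin n, (∑ j' : Fin p, E i' j' * if j' = j ∧ i' = i then 1 else 0)
      = if i' = i then E i' j else 0 := by
    intro i'
    rcases eq_or_ne i' i with h | h
    · subst h
      simp only [and_true, mul_ite, mul_one, mul_zero, if_pos rfl]
      rw [Finset.sum_ite_eq' Finset.univ j (fun j' => E i' j')]
      simp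
    · simp [h]
  rw [Finset.sum_congr rfl fun i' _ => h1 i']
  rw [Finset.sum_ite_eq' Finset.univ i (fun i' => E i' j)]
  simp

theorem pairM_neg (E : Fin n → Fin p → ℝ) (ξ : Fin p → Rn n) :
    pairM E (-ξ) = -pairM E ξ := by
  unfold pairM
  rw [← Finset.sum_neg_distrib]
  apply Finset.sum_congr rfl
  intro i _
  rw [← Finset.sum_neg_distrib]
  apply Finset.sum_congr rfl
  intro j _
  simp

theorem mwSet_convex (K : ConvexBody (Rn n)) : Convex ℝ (mwSet μ K) := by
  intro E hE F hF a b ha hb hab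
  intro ξ
  rw [pairM_smul_add]
  calc a * pairM E ξ + b * pairM F ξ ≤ a * meanWidthFn μ K ξ + b * meanWidthFn μ K ξ :=
        add_le_add (mul_le_mul_of_nonneg_left (hE ξ) ha) (mul_le_mul_of_nonneg_left (hF ξ) hb)
    _ = meanWidthFn μ K ξ := by rw [← add_mul, hab, one_mul]

theorem mwSet_isClosed (K : ConvexBody (Rn n)) : IsClosed (mwSet μ K) := by
  have : mwSet μ K = ⋂ ξ : Fin p → Rn n, {E | pairM E ξ ≤ meanWidthFn μ K ξ} := by
    ext E; simp [mwSet, Set.mem_iInter]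
  rw [this]
  exact isClosed_iInter fun ξ => isClosed_le (pairM_continuous ξ) continuous_const

theorem mwSet_isCompact (K : ConvexBody (Rn n)) : IsCompact (mwSet μ K) := by
  apply Metric.isCompact_of_isClosed_isBounded (mwSet_isClosed μ K)
  rw [isBounded_iff_forall_norm_le]
  refine ⟨∑ i : Fin n, ∑ j : Fin p,
    (|meanWidthFn μ K (delta j i)| + |meanWidthFn μ K (-(delta j i))|), fun E hE => ?_⟩
  have hBnn : ∀ (i : Fin n) (j : Fin p),
      (0:ℝ) ≤ |meanWidthFn μ K (delta j i)| + |meanWidthFn μ K (-(delta j i))| :=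
    fun i j => add_nonneg (abs_nonneg _) (abs_nonneg _)
  have hCnn : (0:ℝ) ≤ ∑ i : Fin n, ∑ j : Fin p,
      (|meanWidthFn μ K (delta j i)| + |meanWidthFn μ K (-(delta j i))|) :=
    Finset.sum_nonneg fun i _ => Finset.sum_nonneg fun j _ => hBnn i j
  rw [pi_norm_le_iff_of_nonneg hCnn]
  intro i
  rw [pi_norm_le_iff_of_nonneg hCnn]
  intro j
  have h1 : E i j ≤ |meanWidthFn μ K (delta j i)| := by
    have := hE (delta j i)
    rw [pairM_delta] at this
    exact this.trans (le_abs_self _)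
  have h2 : -E i j ≤ |meanWidthFn μ K (-(delta j i))| := by
    have := hE (-(delta j i))
    rw [pairM_neg, pairM_delta] at this
    have := neg_le_neg this
    rw [neg_neg] at this
    calc -E i j ≤ -(-(meanWidthFn μ K (-(delta j i)))) := by
          rw [neg_neg]
          have h3 := hE (-(delta j i))
          rw [pairM_neg, pairM_delta] at h3
          linarith
      _ ≤ |meanWidthFn μ K (-(delta j i))| := by rw [neg_neg]; exact le_abs_self _
  have hone : ‖E i j‖ ≤ |meanWidthFn μ K (delta j i)| + |meanWidthFn μ K (-(delta j i))| := by
    rw [Real.norm_eq_abs, abs_le]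
    constructor <;> [linarith [abs_nonneg (meanWidthFn μ K (delta j i))];
      linarith [abs_nonneg (meanWidthFn μ K (-(delta j i)))]]
  refine hone.trans ?_
  calc |meanWidthFn μ K (delta j i)| + |meanWidthFn μ K (-(delta j i))|
      ≤ ∑ j' : Fin p, (|meanWidthFn μ K (delta j' i)| + |meanWidthFn μ K (-(delta j' i))|) :=
        Finset.single_le_sum (fun j' _ => hBnn i j') (Finset.mem_univ j)
    _ ≤ _ := Finset.single_le_sum (f := fun i' => ∑ j' : Fin p,
          (|meanWidthFn μ K (delta j' i')| + |meanWidthFn μ K (-(delta j' i'))|))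
          (fun i' _ => Finset.sum_nonneg fun j' _ => hBnn i' j') (Finset.mem_univ i)

/-- The mean width body. -/
def mwB (hsph : μ ({u : Fin p → ℝ | ∑ j, (u j) ^ 2 = 1}ᶜ) = 0) (K : ConvexBody (Rn n)) :
    ConvexBody (Fin n → Fin p → ℝ) :=
  ⟨mwSet μ K, mwSet_convex μ K, mwSet_isCompact μ K, by
    obtain ⟨E, hE, -⟩ := exists_pair_eq μ hsph K 0
    exact ⟨E, hE⟩⟩

theorem mwB_support (hsph : μ ({u : Fin p → ℝ | ∑ j, (u j) ^ 2 = 1}ᶜ) = 0)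
    (K : ConvexBody (Rn n)) (ξ : Fin p → Rn n) :
    sSup ((fun E => pairM E ξ) '' (mwB μ hsph K : Set (Fin n → Fin p → ℝ)))
      = meanWidthFn μ K ξ := by
  apply le_antisymm
  · exact sSup_le' (mwB μ hsph K).nonempty fun E hE => hE ξ
  · obtain ⟨E, hE, hpair⟩ := exists_pair_eq μ hsph K ξ
    rw [← hpair]
    exact le_sSup' (mwB μ hsph K).isCompact (pairM_continuous ξ) hE

theorem mem_of_pair_le (B : ConvexBody (Fin n → Fin p → ℝ)) (E : Fin n → Fin p → ℝ)
    (h : ∀ ξ : Fin p → Rn n,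
      pairM E ξ ≤ sSup ((fun F => pairM F ξ) '' (B : Set (Fin n → Fin p → ℝ)))) :
    E ∈ (B : Set (Fin n → Fin p → ℝ)) := by
  by_contra hd
  obtain ⟨f, u, hfb, hfa⟩ := geometric_hahn_banach_closed_point B.convex B.isClosed hd
  set ξf : Fin p → Rn n := fun j i => f (delta i j) with hξf
  have hpair : ∀ F : Fin n → Fin p → ℝ, pairM F ξf = f F := by
    intro F
    rw [show f F = (f : (Fin n → Fin p → ℝ) →ₗ[ℝ] ℝ) F from rfl, linear_eq_sum]
    rfl
  have h1 : sSup ((fun F => pairM F ξf) '' (B : Set (Fin n → Fin p → ℝ))) ≤ u :=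
    sSup_le' B.nonempty fun F hF => by rw [hpair]; exact (hfb F hF).le
  have h2 := h ξf
  rw [hpair] at h2
  linarith

theorem body_eq_of_support {B C : ConvexBody (Fin n → Fin p → ℝ)}
    (h : ∀ ξ : Fin p → Rn n,
      sSup ((fun F => pairM F ξ) '' (B : Set (Fin n → Fin p → ℝ)))
        = sSup ((fun F => pairM F ξ) '' (C : Set (Fin n → Fin p → ℝ)))) : B = C := by
  apply SetLike.coe_injective
  ext E
  constructor
  · intro hE
    exact mem_of_pair_le C E fun ξ => (h ξ) ▸ le_sSup' B.isCompact (pairM_continuous ξ) hE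
  · intro hE
    exact mem_of_pair_le B E fun ξ => (h ξ).symm ▸ le_sSup' C.isCompact (pairM_continuous ξ) hE

end Body
end MW


namespace MW
section Trans
variable {n p : ℕ} (μ : MeasureTheory.Measure (Fin p → ℝ)) [IsFiniteMeasure μ]

theorem integrable_id' (hsph : μ ({u : Fin p → ℝ | ∑ j, (u j) ^ 2 = 1}ᶜ) = 0) :
    Integrable (fun u : Fin p → ℝ => u) μ := by
  refine ⟨continuous_id.aestronglyMeasurable, ?_⟩
  apply MeasureTheory.HasFiniteIntegral.of_bounded (C := (1:ℝ))
  filter_upwards [ae_bound μ hsph] with u hu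
  rw [pi_norm_le_iff_of_nonneg zero_le_one]
  exact fun j => hu j

theorem integral_coord (hsph : μ ({u : Fin p → ℝ | ∑ j, (u j) ^ 2 = 1}ᶜ) = 0)
    (hcent : (∫ u, u ∂μ) = (0 : Fin p → ℝ)) (j : Fin p) : ∫ u, u j ∂μ = 0 := by
  have h := (ContinuousLinearMap.proj (R := ℝ) (φ := fun _ : Fin p => ℝ) j).integral_comp_comm
    (integrable_id' μ hsph)
  simp only [ContinuousLinearMap.proj_apply] at h
  rw [h, hcent]
  rfl

theorem integrable_coord_mul (hsph : μ ({u : Fin p → ℝ | ∑ j, (u j) ^ 2 = 1}ᶜ) = 0)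
    (c : ℝ) (j : Fin p) : Integrable (fun u : Fin p → ℝ => c * u j) μ := by
  refine ⟨(continuous_const.mul (continuous_apply j)).aestronglyMeasurable, ?_⟩
  apply MeasureTheory.HasFiniteIntegral.of_bounded (C := |c|)
  filter_upwards [ae_bound μ hsph] with u hu
  rw [Real.norm_eq_abs, abs_mul]
  calc |c| * |u j| ≤ |c| * 1 := mul_le_mul_of_nonneg_left (hu j) (abs_nonneg c)
    _ = |c| := mul_one _

theorem suppFn_point (x : Rn n) (y : Rn n) : suppFn (pointBody x) y = ∑ i, x i * y i := by
  unfold suppFn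
  have : ((pointBody x : ConvexBody (Rn n)) : Set (Rn n)) = {x} := rfl
  rw [this, Set.image_singleton, csSup_singleton]

theorem integral_dot_zero (hsph : μ ({u : Fin p → ℝ | ∑ j, (u j) ^ 2 = 1}ᶜ) = 0)
    (hcent : (∫ u, u ∂μ) = (0 : Fin p → ℝ)) (x : Rn n) (ξ : Fin p → Rn n) :
    ∫ u, (∑ i, x i * (∑ j, ξ j i * u j)) ∂μ = 0 := by
  have hrw : ∀ u : Fin p → ℝ,
      (∑ i, x i * (∑ j, ξ j i * u j)) = ∑ j, (∑ i, x i * ξ j i) * u j := by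
    intro u
    simp_rw [Finset.mul_sum, Finset.sum_mul]
    rw [Finset.sum_comm]
    exact Finset.sum_congr rfl fun j _ => Finset.sum_congr rfl fun i _ => by ring
  simp_rw [hrw]
  rw [MeasureTheory.integral_finset_sum _
    (fun j _ => integrable_coord_mul μ hsph (∑ i, x i * ξ j i) j)]
  apply Finset.sum_eq_zero
  intro j _
  rw [MeasureTheory.integral_const_mul, integral_coord μ hsph hcent j, mul_zero]

theorem mw_translate (hsph : μ ({u : Fin p → ℝ | ∑ j, (u j) ^ 2 = 1}ᶜ) = 0)
    (hcent : (∫ u, u ∂μ) = (0 : Fin p → ℝ)) (K : ConvexBody (Rn n)) (x : Rn n)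
    (ξ : Fin p → Rn n) :
    meanWidthFn μ (K + pointBody x) ξ = meanWidthFn μ K ξ := by
  unfold meanWidthFn
  have h1 : ∀ u : Fin p → ℝ,
      suppFn (K + pointBody x) (fun i => ∑ j, ξ j i * u j)
        = suppFn K (fun i => ∑ j, ξ j i * u j) + ∑ i, x i * (∑ j, ξ j i * u j) := by
    intro u
    rw [suppFn_body_add, suppFn_point]
  simp_rw [h1]
  rw [MeasureTheory.integral_add (integrable_suppFn μ hsph K ξ) ?_]
  · rw [integral_dot_zero μ hsph hcent x ξ, add_zero]
  · have h2 : (fun u : Fin p → ℝ => ∑ i, x i * (∑ j, ξ j i * u j))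
        = fun u => suppFn (pointBody x) (fun i => ∑ j, ξ j i * u j) := by
      funext u
      rw [suppFn_point]
    rw [h2]
    exact integrable_suppFn μ hsph (pointBody x) ξ

end Trans
end MW


namespace MW
section Cont
variable {n p : ℕ} (μ : MeasureTheory.Measure (Fin p → ℝ)) [IsFiniteMeasure μ]

theorem clm_eq_pair (f : (Fin n → Fin p → ℝ) →L[ℝ] ℝ) (F : Fin n → Fin p → ℝ) :
    pairM F (fun j i => f (delta i j)) = f F := by
  rw [show f F = (f : (Fin n → Fin p → ℝ) →ₗ[ℝ] ℝ) F from rfl, linear_eq_sum]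
  rfl

theorem mw_le_mw (hsph : μ ({u : Fin p → ℝ | ∑ j, (u j) ^ 2 = 1}ᶜ) = 0)
    {K L : ConvexBody (Rn n)} {d : ℝ} (hd : 0 ≤ d)
    (h : ∀ x ∈ (K : Set (Rn n)), ∃ z ∈ (L : Set (Rn n)), dist x z ≤ d) (ξ : Fin p → Rn n) :
    meanWidthFn μ K ξ
      ≤ meanWidthFn μ L ξ + (μ Set.univ).toReal * (d * ∑ i, ∑ j, |ξ j i|) := by
  have key : ∀ᵐ u ∂μ, suppFn K (fun i => ∑ j, ξ j i * u j)
      ≤ suppFn L (fun i => ∑ j, ξ j i * u j) + d * ∑ i, ∑ j, |ξ j i| := by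
    filter_upwards [ae_bound μ hsph] with u hu
    calc suppFn K (fun i => ∑ j, ξ j i * u j)
        ≤ suppFn L (fun i => ∑ j, ξ j i * u j) + d * ∑ i, |∑ j, ξ j i * u j| :=
          suppFn_le_suppFn K L h _
      _ ≤ suppFn L (fun i => ∑ j, ξ j i * u j) + d * ∑ i, ∑ j, |ξ j i| := by
          apply add_le_add_right
          apply mul_le_mul_of_nonneg_left _ hd
          apply Finset.sum_le_sum
          intro i _
          calc |∑ j, ξ j i * u j| ≤ ∑ j, |ξ j i * u j| := Finset.abs_sum_le_sum_abs _ _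
            _ ≤ ∑ j, |ξ j i| := by
                apply Finset.sum_le_sum
                intro j _
                rw [abs_mul]
                calc |ξ j i| * |u j| ≤ |ξ j i| * 1 :=
                      mul_le_mul_of_nonneg_left (hu j) (abs_nonneg _)
                  _ = |ξ j i| := mul_one _
  have hint : Integrable (fun u : Fin p → ℝ =>
      suppFn L (fun i => ∑ j, ξ j i * u j) + d * ∑ i, ∑ j, |ξ j i|) μ :=
    (integrable_suppFn μ hsph L ξ).add (integrable_const _)
  calc meanWidthFn μ K ξ
      ≤ ∫ u, (suppFn L (fun i => ∑ j, ξ j i * u j) + d * ∑ i, ∑ j, |ξ j i|) ∂μ :=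
        integral_mono_ae (integrable_suppFn μ hsph K ξ) hint key
    _ = meanWidthFn μ L ξ + (μ Set.univ).toReal * (d * ∑ i, ∑ j, |ξ j i|) := by
        rw [MeasureTheory.integral_add (integrable_suppFn μ hsph L ξ) (integrable_const _),
          MeasureTheory.integral_const, smul_eq_mul]
        rfl

theorem subset_add_ball (hsph : μ ({u : Fin p → ℝ | ∑ j, (u j) ^ 2 = 1}ᶜ) = 0)
    {K L : ConvexBody (Rn n)} {δ : ℝ} (hδ : 0 ≤ δ)
    (h : ∀ ξ : Fin p → Rn n,
      meanWidthFn μ K ξ ≤ meanWidthFn μ L ξ + δ * ∑ i, ∑ j, |ξ j i|) :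
    (mwB μ hsph K : Set (Fin n → Fin p → ℝ))
      ⊆ (mwB μ hsph L : Set (Fin n → Fin p → ℝ)) + Metric.closedBall 0 δ := by
  intro E hE
  by_contra hd
  set S := (mwB μ hsph L : Set (Fin n → Fin p → ℝ)) + Metric.closedBall 0 δ with hS
  have hSconv : Convex ℝ S := ((mwB μ hsph L).convex).add (convex_closedBall 0 δ)
  have hScomp : IsCompact S := ((mwB μ hsph L).isCompact).add (isCompact_closedBall 0 δ)
  obtain ⟨f, u, hfb, hfa⟩ := geometric_hahn_banach_closed_point hSconv hScomp.isClosed hd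
  set ξf : Fin p → Rn n := fun j i => f (delta i j) with hξf
  set z : Fin n → Fin p → ℝ := fun i j => if 0 ≤ ξf j i then δ else -δ with hz
  have hzball : z ∈ Metric.closedBall (0 : Fin n → Fin p → ℝ) δ := by
    rw [Metric.mem_closedBall, dist_zero_right]
    rw [pi_norm_le_iff_of_nonneg hδ]
    intro i
    rw [pi_norm_le_iff_of_nonneg hδ]
    intro j
    rcases le_or_gt 0 (ξf j i) with hc | hc
    · simp [hz, hc, Real.norm_eq_abs, abs_of_nonneg hδ]
    · simp [hz, not_le.2 hc, Real.norm_eq_abs, abs_of_nonneg hδ]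
  have hzpair : pairM z ξf = δ * ∑ i, ∑ j, |ξf j i| := by
    unfold pairM
    rw [Finset.mul_sum]
    apply Finset.sum_congr rfl
    intro i _
    rw [Finset.mul_sum]
    apply Finset.sum_congr rfl
    intro j _
    rcases le_or_gt 0 (ξf j i) with hc | hc
    · simp only [hz, if_pos hc]
      rw [abs_of_nonneg hc]
    · simp only [hz, if_neg (not_le.2 hc)]
      rw [abs_of_neg hc]
      ring
  have hmwL : meanWidthFn μ L ξf ≤ u - f z := by
    rw [← mwB_support μ hsph L ξf]
    apply sSup_le' (mwB μ hsph L).nonempty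
    intro F hF
    have hmem : F + z ∈ S := Set.add_mem_add hF hzball
    have := hfb _ hmem
    rw [map_add] at this
    have h2 : pairM F ξf = f F := clm_eq_pair f F
    linarith
  have hfz : f z = δ * ∑ i, ∑ j, |ξf j i| := by rw [← clm_eq_pair f z, hzpair]
  have hfE : f E = pairM E ξf := (clm_eq_pair f E).symm
  have h3 : pairM E ξf ≤ meanWidthFn μ K ξf := hE ξf
  have h4 := h ξf
  rw [hfz] at hmwL
  rw [hfE] at hfa
  linarith

theorem dist_mwB_le (hsph : μ ({u : Fin p → ℝ | ∑ j, (u j) ^ 2 = 1}ᶜ) = 0)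
    (K L : ConvexBody (Rn n)) :
    dist (mwB μ hsph K) (mwB μ hsph L) ≤ (μ Set.univ).toReal * dist K L := by
  set d := dist K L with hdd
  have hd : 0 ≤ d := dist_nonneg
  have hC : (0:ℝ) ≤ (μ Set.univ).toReal := ENNReal.toReal_nonneg
  have hKL : ∀ x ∈ (K : Set (Rn n)), ∃ y ∈ (L : Set (Rn n)), dist x y ≤ d := by
    intro x hx
    obtain ⟨y, hy, hyd⟩ := L.isCompact.exists_infDist_eq_dist L.nonempty x
    refine ⟨y, hy, ?_⟩
    rw [← hyd]
    calc Metric.infDist x (L : Set (Rn n)) ≤ Metric.hausdorffDist (K : Set (Rn n)) L :=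
          Metric.infDist_le_hausdorffDist_of_mem hx ConvexBody.hausdorffEdist_ne_top
      _ = d := ConvexBody.hausdorffDist_coe K L
  have hLK : ∀ x ∈ (L : Set (Rn n)), ∃ y ∈ (K : Set (Rn n)), dist x y ≤ d := by
    intro x hx
    obtain ⟨y, hy, hyd⟩ := K.isCompact.exists_infDist_eq_dist K.nonempty x
    refine ⟨y, hy, ?_⟩
    rw [← hyd]
    calc Metric.infDist x (K : Set (Rn n)) ≤ Metric.hausdorffDist (L : Set (Rn n)) K :=
          Metric.infDist_le_hausdorffDist_of_mem hx ConvexBody.hausdorffEdist_ne_top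
      _ = d := by rw [ConvexBody.hausdorffDist_coe L K]; exact dist_comm L K
  set δ := (μ Set.univ).toReal * d with hδd
  have hδ : 0 ≤ δ := mul_nonneg hC hd
  have incl1 : (mwB μ hsph K : Set (Fin n → Fin p → ℝ))
      ⊆ (mwB μ hsph L : Set (Fin n → Fin p → ℝ)) + Metric.closedBall 0 δ := by
    apply subset_add_ball μ hsph hδ
    intro ξ
    have := mw_le_mw μ hsph hd hKL ξ
    calc meanWidthFn μ K ξ ≤ meanWidthFn μ L ξ + (μ Set.univ).toReal * (d * ∑ i, ∑ j, |ξ j i|) :=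
          this
      _ = meanWidthFn μ L ξ + δ * ∑ i, ∑ j, |ξ j i| := by rw [hδd]; ring
  have incl2 : (mwB μ hsph L : Set (Fin n → Fin p → ℝ))
      ⊆ (mwB μ hsph K : Set (Fin n → Fin p → ℝ)) + Metric.closedBall 0 δ := by
    apply subset_add_ball μ hsph hδ
    intro ξ
    have := mw_le_mw μ hsph hd hLK ξ
    calc meanWidthFn μ L ξ ≤ meanWidthFn μ K ξ + (μ Set.univ).toReal * (d * ∑ i, ∑ j, |ξ j i|) :=
          this
      _ = meanWidthFn μ K ξ + δ * ∑ i, ∑ j, |ξ j i| := by rw [hδd]; ring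
  rw [← ConvexBody.hausdorffDist_coe (mwB μ hsph K) (mwB μ hsph L)]
  apply Metric.hausdorffDist_le_of_mem_dist hδ
  · intro x hx
    rcases Set.mem_add.1 (incl1 hx) with ⟨F, hF, w, hw, rfl⟩
    refine ⟨F, hF, ?_⟩
    rw [dist_eq_norm]
    simp only [add_sub_cancel_left]
    rw [Metric.mem_closedBall, dist_zero_right] at hw
    exact hw
  · intro x hx
    rcases Set.mem_add.1 (incl2 hx) with ⟨F, hF, w, hw, rfl⟩
    refine ⟨F, hF, ?_⟩
    rw [dist_eq_norm]
    simp only [add_sub_cancel_left]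
    rw [Metric.mem_closedBall, dist_zero_right] at hw
    exact hw

theorem continuous_mwB (hsph : μ ({u : Fin p → ℝ | ∑ j, (u j) ^ 2 = 1}ᶜ) = 0) :
    Continuous (fun K : ConvexBody (Rn n) => mwB μ hsph K) := by
  have : LipschitzWith (μ Set.univ).toReal.toNNReal
      (fun K : ConvexBody (Rn n) => mwB μ hsph K) := by
    apply LipschitzWith.of_dist_le_mul
    intro K L
    rw [Real.coe_toNNReal _ ENNReal.toReal_nonneg]
    exact dist_mwB_le μ hsph K L
  exact this.continuous

end Cont
end MW


namespace MW
section Val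
variable {n p : ℕ}

/-- If the union of two bodies is a body, the support of the intersection dominates the
smaller support value. -/
theorem suppFn_inter_ge {K L M N : ConvexBody (Rn n)}
    (hM : (M : Set (Rn n)) = (K : Set (Rn n)) ∪ (L : Set (Rn n)))
    (hN : (N : Set (Rn n)) = (K : Set (Rn n)) ∩ (L : Set (Rn n)))
    (y : Rn n) (hKL : suppFn K y ≤ suppFn L y) :
    suppFn K y ≤ suppFn N y := by
  obtain ⟨x, hx, hxe⟩ := exists_suppFn K y
  obtain ⟨z, hz, hze⟩ := exists_suppFn L y
  have hseg : segment ℝ x z ⊆ (K : Set (Rn n)) ∪ (L : Set (Rn n)) := by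
    rw [← hM]
    apply M.convex.segment_subset
    · rw [hM]; exact Set.mem_union_left _ hx
    · rw [hM]; exact Set.mem_union_right _ hz
  have hconn : IsPreconnected (segment ℝ x z) := (convex_segment x z).isPreconnected
  obtain ⟨w, hwseg, hwK, hwL⟩ :
      ∃ w, w ∈ segment ℝ x z ∧ w ∈ (K : Set (Rn n)) ∧ w ∈ (L : Set (Rn n)) := by
    have := isPreconnected_closed_iff.1 hconn (K : Set (Rn n)) (L : Set (Rn n))
      K.isClosed L.isClosed hseg
      ⟨x, left_mem_segment ℝ x z, hx⟩ ⟨z, right_mem_segment ℝ x z, hz⟩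
    obtain ⟨w, hw1, hw2, hw3⟩ := this
    exact ⟨w, hw1, hw2, hw3⟩
  obtain ⟨a, b, ha, hb, hab, hw⟩ := hwseg
  have hdot : suppFn K y ≤ ∑ i, w i * y i := by
    have h1 : ∑ i, w i * y i = a * (∑ i, x i * y i) + b * (∑ i, z i * y i) := by
      rw [← hw]
      rw [Finset.mul_sum, Finset.mul_sum, ← Finset.sum_add_distrib]
      apply Finset.sum_congr rfl
      intro i _
      simp only [Pi.add_apply, Pi.smul_apply, smul_eq_mul]
      ring
    rw [h1, ← hxe, ← hze]
    calc suppFn K y = a * suppFn K y + b * suppFn K y := by rw [← add_mul, hab, one_mul]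
      _ ≤ a * suppFn K y + b * suppFn L y :=
          add_le_add_right (mul_le_mul_of_nonneg_left hKL hb) _
  refine hdot.trans (dot_le_suppFn N y ?_)
  rw [hN]
  exact ⟨hwK, hwL⟩

theorem suppFn_union_inter {K L M N : ConvexBody (Rn n)}
    (hM : (M : Set (Rn n)) = (K : Set (Rn n)) ∪ (L : Set (Rn n)))
    (hN : (N : Set (Rn n)) = (K : Set (Rn n)) ∩ (L : Set (Rn n))) (y : Rn n) :
    suppFn M y + suppFn N y = suppFn K y + suppFn L y := by
  have hmax : suppFn M y = max (suppFn K y) (suppFn L y) := by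
    unfold suppFn
    rw [hM, Set.image_union, csSup_union (bdd _ K.isCompact (dot_continuous y))
      (K.nonempty.image _) (bdd _ L.isCompact (dot_continuous y)) (L.nonempty.image _)]
  have hminle : suppFn N y ≤ min (suppFn K y) (suppFn L y) := by
    apply le_min
    · apply suppFn_le
      intro x hx
      rw [hN] at hx
      exact dot_le_suppFn K y hx.1
    · apply suppFn_le
      intro x hx
      rw [hN] at hx
      exact dot_le_suppFn L y hx.2
  have hminge : min (suppFn K y) (suppFn L y) ≤ suppFn N y := by
    rcases le_total (suppFn K y) (suppFn L y) with h | h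
    · rw [min_eq_left h]
      exact suppFn_inter_ge hM hN y h
    · rw [min_eq_right h]
      have hM' : (M : Set (Rn n)) = (L : Set (Rn n)) ∪ (K : Set (Rn n)) := by
        rw [hM, Set.union_comm]
      have hN' : (N : Set (Rn n)) = (L : Set (Rn n)) ∩ (K : Set (Rn n)) := by
        rw [hN, Set.inter_comm]
      exact suppFn_inter_ge hM' hN' y h
  have hmin : suppFn N y = min (suppFn K y) (suppFn L y) := le_antisymm hminle hminge
  rw [hmax, hmin, add_comm]
  exact min_add_max _ _

variable (μ : MeasureTheory.Measure (Fin p → ℝ)) [IsFiniteMeasure μ]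

theorem mw_union_inter (hsph : μ ({u : Fin p → ℝ | ∑ j, (u j) ^ 2 = 1}ᶜ) = 0)
    {K L M N : ConvexBody (Rn n)}
    (hM : (M : Set (Rn n)) = (K : Set (Rn n)) ∪ (L : Set (Rn n)))
    (hN : (N : Set (Rn n)) = (K : Set (Rn n)) ∩ (L : Set (Rn n))) (ξ : Fin p → Rn n) :
    meanWidthFn μ M ξ + meanWidthFn μ N ξ = meanWidthFn μ K ξ + meanWidthFn μ L ξ := by
  unfold meanWidthFn
  rw [← MeasureTheory.integral_add (integrable_suppFn μ hsph M ξ) (integrable_suppFn μ hsph N ξ),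
    ← MeasureTheory.integral_add (integrable_suppFn μ hsph K ξ) (integrable_suppFn μ hsph L ξ)]
  apply integral_congr_ae
  filter_upwards with u
  exact suppFn_union_inter hM hN _

theorem pairM_addE (E F : Fin n → Fin p → ℝ) (ξ : Fin p → Rn n) :
    pairM (E + F) ξ = pairM E ξ + pairM F ξ := by
  unfold pairM
  rw [← Finset.sum_add_distrib]
  apply Finset.sum_congr rfl
  intro i _
  rw [← Finset.sum_add_distrib]
  apply Finset.sum_congr rfl
  intro j _
  simp only [Pi.add_apply]
  ring

theorem support_body_add (A B : ConvexBody (Fin n → Fin p → ℝ)) (ξ : Fin p → Rn n) :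
    sSup ((fun E => pairM E ξ) '' ((A + B : ConvexBody (Fin n → Fin p → ℝ)) :
        Set (Fin n → Fin p → ℝ)))
      = sSup ((fun E => pairM E ξ) '' (A : Set (Fin n → Fin p → ℝ)))
        + sSup ((fun E => pairM E ξ) '' (B : Set (Fin n → Fin p → ℝ))) := by
  have hco : ((A + B : ConvexBody (Fin n → Fin p → ℝ)) : Set (Fin n → Fin p → ℝ))
      = (A : Set (Fin n → Fin p → ℝ)) + (B : Set (Fin n → Fin p → ℝ)) := rfl
  rw [hco]
  exact sSup_add A.isCompact A.nonempty B.isCompact B.nonempty (pairM_continuous ξ)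
    (fun E F => pairM_addE E F ξ)

end Val
end MW


namespace MW
section Equiv
variable {n p : ℕ}

theorem sum_swap3 {a b c : ℕ} (f : Fin a → Fin b → Fin c → ℝ) :
    ∑ i, ∑ j, ∑ l, f i j l = ∑ l, ∑ j, ∑ i, f i j l :=
  calc ∑ i, ∑ j, ∑ l, f i j l = ∑ j, ∑ i, ∑ l, f i j l := Finset.sum_comm
    _ = ∑ j, ∑ l, ∑ i, f i j l := Finset.sum_congr rfl fun j _ => Finset.sum_comm
    _ = ∑ l, ∑ j, ∑ i, f i j l := Finset.sum_comm

theorem pairM_leftMul (T : Matrix (Fin n) (Fin n) ℝ) (E : Fin n → Fin p → ℝ)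
    (ξ : Fin p → Rn n) :
    pairM (matLeftMul T E) ξ = pairM E (fun j l => ∑ i, ξ j i * T i l) := by
  have hT : (matLeftMul T) E = fun i j => ∑ l, T i l * E l j := rfl
  unfold pairM
  rw [hT]
  have lhs : ∑ i, ∑ j, (∑ l, T i l * E l j) * ξ j i
      = ∑ i, ∑ j, ∑ l, T i l * E l j * ξ j i := by
    apply Finset.sum_congr rfl
    intro i _
    apply Finset.sum_congr rfl
    intro j _
    rw [Finset.sum_mul]
  have rhs : ∑ l, ∑ j, E l j * (∑ i, ξ j i * T i l)
      = ∑ l, ∑ j, ∑ i, T i l * E l j * ξ j i := by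
    apply Finset.sum_congr rfl
    intro l _
    apply Finset.sum_congr rfl
    intro j _
    rw [Finset.mul_sum]
    apply Finset.sum_congr rfl
    intro i _
    ring
  rw [lhs, rhs]
  exact sum_swap3 (fun i j l => T i l * E l j * ξ j i)

theorem suppFn_lmap (T : Matrix (Fin n) (Fin n) ℝ) (K : ConvexBody (Rn n)) (y : Rn n) :
    suppFn (K.lmap (Matrix.mulVecLin T)) y = suppFn K (fun l => ∑ i, T i l * y i) := by
  unfold suppFn
  have hco : ((K.lmap (Matrix.mulVecLin T)) : Set (Rn n))
      = (Matrix.mulVecLin T) '' (K : Set (Rn n)) := rfl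
  rw [hco, Set.image_image]
  have hfun : (fun x : Rn n => ∑ i, Matrix.mulVecLin T x i * y i)
      = (fun x : Rn n => ∑ l, x l * (∑ i, T i l * y i)) := by
    funext x
    have hmv : ∀ i, Matrix.mulVecLin T x i = ∑ l, T i l * x l := by
      intro i
      simp [Matrix.mulVecLin_apply, Matrix.mulVec, dotProduct]
    calc ∑ i, Matrix.mulVecLin T x i * y i = ∑ i, ∑ l, T i l * x l * y i := by
          apply Finset.sum_congr rfl
          intro i _
          rw [hmv i, Finset.sum_mul]
      _ = ∑ l, ∑ i, T i l * x l * y i := Finset.sum_comm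
      _ = ∑ l, x l * (∑ i, T i l * y i) := by
          apply Finset.sum_congr rfl
          intro l _
          rw [Finset.mul_sum]
          apply Finset.sum_congr rfl
          intro i _
          ring
  rw [hfun]

end Equiv
end MW


namespace MW
section Equiv2
variable {n p : ℕ} (μ : MeasureTheory.Measure (Fin p → ℝ)) [IsFiniteMeasure μ]

theorem mw_lmap (T : Matrix (Fin n) (Fin n) ℝ) (K : ConvexBody (Rn n)) (ξ : Fin p → Rn n) :
    meanWidthFn μ (K.lmap (Matrix.mulVecLin T)) ξ
      = meanWidthFn μ K (fun j l => ∑ i, ξ j i * T i l) := by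
  unfold meanWidthFn
  apply integral_congr_ae
  filter_upwards with u
  rw [suppFn_lmap]
  congr 1
  funext l
  calc ∑ i, T i l * (∑ j, ξ j i * u j) = ∑ i, ∑ j, T i l * (ξ j i * u j) := by
        apply Finset.sum_congr rfl
        intro i _
        rw [Finset.mul_sum]
    _ = ∑ j, ∑ i, T i l * (ξ j i * u j) := Finset.sum_comm
    _ = ∑ j, (∑ i, ξ j i * T i l) * u j := by
        apply Finset.sum_congr rfl
        intro j _
        rw [Finset.sum_mul]
        apply Finset.sum_congr rfl
        intro i _
        ring

theorem mwB_equivariant (hsph : μ ({u : Fin p → ℝ | ∑ j, (u j) ^ 2 = 1}ᶜ) = 0)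
    (T : Matrix (Fin n) (Fin n) ℝ) (K : ConvexBody (Rn n)) :
    mwB μ hsph (K.lmap (Matrix.mulVecLin T)) = (mwB μ hsph K).lmap (matLeftMul T) := by
  apply body_eq_of_support
  intro ξ
  rw [mwB_support μ hsph _ ξ, mw_lmap μ T K ξ]
  have hco : (((mwB μ hsph K).lmap (matLeftMul T)) : Set (Fin n → Fin p → ℝ))
      = (matLeftMul T) '' (mwB μ hsph K : Set (Fin n → Fin p → ℝ)) := rfl
  rw [hco, Set.image_image]
  have hfun : (fun E => pairM (matLeftMul T E) ξ)
      = fun E : Fin n → Fin p → ℝ => pairM E (fun j l => ∑ i, ξ j i * T i l) := by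
    funext E
    exact pairM_leftMul T E ξ
  rw [hfun, mwB_support μ hsph K _]

end Equiv2
end MW

/-- **The `Q`-mean width body (Proposition 7.3).** For a centered finite Borel measure `μ` on
`S^{p-1}`, the function `H_K(ξ) = ∫ h_K(ξᵀ u) dμ(u)` is the support function of a convex body
`M_μ K ⊆ Hom(ℝ^p, ℝⁿ)` (paired with `Hom(ℝⁿ, ℝ^p)` by the trace pairing), `M_μ` is Minkowski
additive, and `M_μ` is a translation-invariant, continuous, `SL_n(ℝ)`-equivariant Minkowski
valuation with `M_μ(T K) = {T ∘ S : S ∈ M_μ K}`. -/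
theorem stmt14 {n p : ℕ} (hn : 2 ≤ n) (hp : 1 ≤ p)
    (μ : MeasureTheory.Measure (Fin p → ℝ)) [MeasureTheory.IsFiniteMeasure μ]
    (hsph : μ ({u : Fin p → ℝ | ∑ j, (u j) ^ 2 = 1}ᶜ) = 0)
    (hcent : (∫ u, u ∂μ) = (0 : Fin p → ℝ)) :
    (∀ (K : ConvexBody (Rn n)),
      (∀ c : ℝ, 0 ≤ c → ∀ ξ : Fin p → Rn n, meanWidthFn μ K (c • ξ) = c * meanWidthFn μ K ξ) ∧
      (∀ ξ₁ ξ₂ : Fin p → Rn n,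
        meanWidthFn μ K (ξ₁ + ξ₂) ≤ meanWidthFn μ K ξ₁ + meanWidthFn μ K ξ₂)) ∧
    ∃ M : ConvexBody (Rn n) → ConvexBody (Fin n → Fin p → ℝ),
      (∀ (K : ConvexBody (Rn n)) (ξ : Fin p → Rn n),
        sSup ((fun E : Fin n → Fin p → ℝ => ∑ i, ∑ j, E i j * ξ j i) ''
          (M K : Set (Fin n → Fin p → ℝ))) = meanWidthFn μ K ξ) ∧
      (∀ (K : ConvexBody (Rn n)) (B : ConvexBody (Fin n → Fin p → ℝ)),
        (∀ ξ : Fin p → Rn n,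
          sSup ((fun E : Fin n → Fin p → ℝ => ∑ i, ∑ j, E i j * ξ j i) ''
            (B : Set (Fin n → Fin p → ℝ))) = meanWidthFn μ K ξ) → B = M K) ∧
      (∀ K L : ConvexBody (Rn n), M (K + L) = M K + M L) ∧
      IsTransInv M ∧ Continuous M ∧ IsMinkowskiVal M ∧
      (∀ (T : Matrix.SpecialLinearGroup (Fin n) ℝ) (K : ConvexBody (Rn n)),
        M (K.lmap (stdRep T)) = (M K).lmap (matLeftMul (T : Matrix (Fin n) (Fin n) ℝ)))  := by
  refine ⟨fun K => ⟨fun c hc ξ => MW.mw_smul μ K hc ξ, fun ξ₁ ξ₂ => MW.mw_add_le μ hsph K ξ₁ ξ₂⟩,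
    fun K => MW.mwB μ hsph K, ?_, ?_, ?_, ?_, ?_, ?_, ?_⟩
  · exact fun K ξ => MW.mwB_support μ hsph K ξ
  · exact fun K B hB => MW.body_eq_of_support fun ξ =>
      (hB ξ).trans (MW.mwB_support μ hsph K ξ).symm
  · intro K L
    refine MW.body_eq_of_support fun ξ => ?_
    rw [MW.mwB_support μ hsph (K + L) ξ, MW.support_body_add, MW.mwB_support μ hsph K ξ,
      MW.mwB_support μ hsph L ξ, MW.mw_body_add μ hsph K L ξ]
  · intro K x
    refine MW.body_eq_of_support fun ξ => ?_
    rw [MW.mwB_support μ hsph _ ξ, MW.mwB_support μ hsph K ξ,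
      MW.mw_translate μ hsph hcent K x ξ]
  · exact MW.continuous_mwB μ hsph
  · intro K L M' N' hM hN
    refine MW.body_eq_of_support fun ξ => ?_
    rw [MW.support_body_add, MW.support_body_add, MW.mwB_support μ hsph M' ξ,
      MW.mwB_support μ hsph N' ξ, MW.mwB_support μ hsph K ξ, MW.mwB_support μ hsph L ξ,
      MW.mw_union_inter μ hsph hM hN ξ]
  · intro T K
    exact MW.mwB_equivariant μ hsph (T : Matrix (Fin n) (Fin n) ℝ) K
end
end

section
/- Let n ≥ 2 and let p ≥ 1 be an integer. Let P_p denote the finite-dimensional real vector space of homogeneous polynomial functions φ : ℝ^n → ℝ of degree p. For a convex body K ∈ K(ℝ^n), define H_K : P_p → ℝ by H_K(φ) = ∫_K |φ(x)| dx (Lebesgue integral). Then: (a) H_K is sublinear, hence the support function of a unique convex body Γ_p K in the dual space P_p*; (b) K ↦ Γ_p K is a continuous Minkowski valuation K(ℝ^n) → K(P_p*); (c) for every T ∈ SL_n(ℝ), Γ_p(T '' K) = ρ*(T) '' (Γ_p K), where ρ*(T) is the linear automorphism of P_p* dual to the action φ ↦ φ ∘ T⁻¹ of T on P_p, i.e.,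 (ρ*(T) λ)(φ) = λ(φ ∘ T) for λ ∈ P_p*, φ ∈ P_p. -/
open scoped Pointwise Matrix
open MeasureTheory

noncomputable section

/-- The homogeneous polynomial of degree `p` on `ℝⁿ` with coefficient vector `c` in the
monomial basis indexed by `Sym (Fin n) p`: `φ_c(x) = ∑_m c_m x^m`. -/
def polyEval {n p : ℕ} (c : Sym (Fin n) p → ℝ) (x : Rn n) : ℝ :=
  ∑ m : Sym (Fin n) p, c m * ((m : Multiset (Fin n)).map x).prod

/-- The pairing between the dual of the space of homogeneous degree-`p` polynomials
(coordinatized by dual-basis coefficients `lam`) and a polynomial with coefficients `c`. -/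
def polyPair {n p : ℕ} (lam c : Sym (Fin n) p → ℝ) : ℝ :=
  ∑ m : Sym (Fin n) p, lam m * c m

namespace Stmt16
open Metric
variable {n p : ℕ}

abbrev E (n p : ℕ) := Sym (Fin n) p → ℝ

/-- `H K c = ∫_K |polyEval c|` as a named function. -/
def mon (m : Sym (Fin n) p) (x : Rn n) : ℝ := ((m : Multiset (Fin n)).map x).prod

lemma continuous_mon (m : Sym (Fin n) p) : Continuous (mon m) := by
  unfold mon
  induction (m : Multiset (Fin n)) using Multiset.induction_on with
  | empty => simp [continuous_const]
  | cons a s ih =>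
      simp only [Multiset.map_cons, Multiset.prod_cons]
      exact ((continuous_apply a).mul ih)

lemma continuous_polyEval (c : Sym (Fin n) p → ℝ) : Continuous (polyEval c) := by
  unfold polyEval
  exact continuous_finset_sum _ fun m _ => continuous_const.mul (continuous_mon m)

lemma polyEval_smul (t : ℝ) (c : Sym (Fin n) p → ℝ) (x : Rn n) :
    polyEval (t • c) x = t * polyEval c x := by
  simp [polyEval, Finset.mul_sum, mul_assoc]

lemma polyEval_add (c₁ c₂ : Sym (Fin n) p → ℝ) (x : Rn n) :
    polyEval (c₁ + c₂) x = polyEval c₁ x + polyEval c₂ x := by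
  simp [polyEval, add_mul, Finset.sum_add_distrib]

lemma polyEval_neg (c : Sym (Fin n) p → ℝ) (x : Rn n) :
    polyEval (-c) x = - polyEval c x := by
  simp [polyEval, ← Finset.sum_neg_distrib]

/-- `H K c = ∫_K |polyEval c|`. -/
def HH (K : ConvexBody (Rn n)) (c : Sym (Fin n) p → ℝ) : ℝ :=
  ∫ x in (K : Set (Rn n)), |polyEval c x|

lemma integrableOn_abs_polyEval (c : Sym (Fin n) p → ℝ) {s : Set (Rn n)} (hs : IsCompact s) :
    IntegrableOn (fun x => |polyEval c x|) s := by
  exact ((continuous_polyEval c).abs.continuousOn).integrableOn_compact hs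

lemma HH_nonneg (K : ConvexBody (Rn n)) (c : Sym (Fin n) p → ℝ) : 0 ≤ HH K c :=
  integral_nonneg fun x => abs_nonneg _

lemma HH_smul (K : ConvexBody (Rn n)) {t : ℝ} (ht : 0 ≤ t) (c : Sym (Fin n) p → ℝ) :
    HH K (t • c) = t * HH K c := by
  unfold HH
  rw [← integral_const_mul]
  congr 1; ext x
  rw [polyEval_smul, abs_mul, abs_of_nonneg ht]

lemma HH_add_le (K : ConvexBody (Rn n)) (c₁ c₂ : Sym (Fin n) p → ℝ) :
    HH K (c₁ + c₂) ≤ HH K c₁ + HH K c₂ := by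
  unfold HH
  rw [← integral_add (integrableOn_abs_polyEval c₁ K.isCompact)
    (integrableOn_abs_polyEval c₂ K.isCompact)]
  refine setIntegral_mono_on (integrableOn_abs_polyEval _ K.isCompact)
    ((integrableOn_abs_polyEval c₁ K.isCompact).add (integrableOn_abs_polyEval c₂ K.isCompact))
    K.isCompact.measurableSet (fun x _ => by rw [polyEval_add]; exact abs_add_le _ _)

lemma HH_neg (K : ConvexBody (Rn n)) (c : Sym (Fin n) p → ℝ) : HH K (-c) = HH K c := by
  unfold HH; congr 1; ext x; rw [polyEval_neg, abs_neg]


lemma polyPair_comm (a b : E n p) : polyPair a b = polyPair b a := by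
  simp [polyPair, mul_comm]

/-- decompose c as sum of singles -/
lemma eq_sum_single (c : E n p) :
    c = ∑ m : Sym (Fin n) p, c m • (Pi.single m 1 : E n p) := by
  have : ∀ m : Sym (Fin n) p, c m • (Pi.single m 1 : E n p) = Pi.single m (c m) := by
    intro m; rw [← Pi.single_smul, smul_eq_mul, mul_one]
  simp only [this]
  exact (Finset.univ_sum_single c).symm

lemma linear_eq_polyPair (g : E n p →ₗ[ℝ] ℝ) (c : E n p) :
    g c = polyPair (fun m => g (Pi.single m 1)) c := by
  conv_lhs => rw [eq_sum_single c]
  rw [map_sum]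
  simp [polyPair, mul_comm]

lemma clm_eq_polyPair (g : E n p →L[ℝ] ℝ) (c : E n p) :
    g c = polyPair c (fun m => g (Pi.single m 1)) := by
  rw [polyPair_comm]; exact linear_eq_polyPair (g : E n p →ₗ[ℝ] ℝ) c

lemma polyPair_lin (c : E n p) :
    IsLinearMap ℝ (fun lam => polyPair lam c) := by
  constructor <;> intro a b <;> simp [polyPair, add_mul, mul_assoc, Finset.sum_add_distrib,
    Finset.mul_sum]

lemma continuous_polyPair (c : E n p) : Continuous (fun lam => polyPair lam c) :=
  (polyPair_lin c).mk' _ |>.continuous_of_finiteDimensional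

lemma polyPair_add_left (a b c : E n p) :
    polyPair (a + b) c = polyPair a c + polyPair b c := (polyPair_lin c).map_add a b

lemma polyPair_single (lam : E n p) (m : Sym (Fin n) p) :
    polyPair lam (Pi.single m 1) = lam m := by
  rw [polyPair_comm]
  simp [polyPair]
  rw [Finset.sum_eq_single m] <;> simp +contextual [Pi.single_apply]

/-- A sublinear functional dominates linear functionals achieving any given value. -/
lemma exists_dominated (N : E n p → ℝ)
    (Nsmul : ∀ t : ℝ, 0 ≤ t → ∀ c, N (t • c) = t * N c)
    (Nadd : ∀ c₁ c₂, N (c₁ + c₂) ≤ N c₁ + N c₂)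
    (Nneg : ∀ c, N (-c) = N c) (Nnonneg : ∀ c, 0 ≤ N c) (c₀ : E n p) :
    ∃ g : E n p →ₗ[ℝ] ℝ, g c₀ = N c₀ ∧ ∀ c, g c ≤ N c := by
  by_cases hc₀ : c₀ = 0
  · refine ⟨0, ?_, fun c => ?_⟩
    · have : N (0 : E n p) = 0 := by
        have := Nsmul 0 le_rfl (0 : E n p)
        simpa using this
      simp [hc₀, this]
    · simpa using Nnonneg c
  · set f : E n p →ₗ.[ℝ] ℝ := LinearPMap.mkSpanSingleton c₀ (N c₀) hc₀ with hf
    have hdom : ∀ x : f.domain, f x ≤ N x := by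
      rintro ⟨x, hx⟩
      obtain ⟨t, rfl⟩ := Submodule.mem_span_singleton.1 hx
      have hx' : t • c₀ ∈ f.domain := hx
      have : f ⟨t • c₀, hx⟩ = t • N c₀ := LinearPMap.mkSpanSingleton'_apply _ _ _ t hx'
      rw [this]
      rcases le_or_gt 0 t with ht | ht
      · rw [Nsmul t ht]; simp [smul_eq_mul]
      · have : N (t • c₀) = (-t) * N c₀ := by
          rw [show t • c₀ = -((-t) • c₀) by simp, Nneg, Nsmul (-t) (by linarith)]
        rw [this]
        have := Nnonneg c₀
        simp only [smul_eq_mul]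
        nlinarith
    obtain ⟨g, hg1, hg2⟩ := exists_extension_of_le_sublinear f N
      (fun t ht c => Nsmul t ht.le c) Nadd hdom
    refine ⟨g, ?_, hg2⟩
    have : g c₀ = f ⟨c₀, Submodule.mem_span_singleton_self c₀⟩ :=
      hg1 ⟨c₀, Submodule.mem_span_singleton_self c₀⟩
    rw [this]
    have h1 : (1:ℝ) • c₀ ∈ f.domain := by rw [one_smul]; exact Submodule.mem_span_singleton_self c₀
    have h2 : f ⟨(1:ℝ) • c₀, h1⟩ = (1:ℝ) • N c₀ :=
      LinearPMap.mkSpanSingleton'_apply c₀ (N c₀) _ 1 h1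
    simp only [one_smul] at h2
    exact h2


variable (N : E n p → ℝ)
  (Nsmul : ∀ t : ℝ, 0 ≤ t → ∀ c, N (t • c) = t * N c)
  (Nadd : ∀ c₁ c₂, N (c₁ + c₂) ≤ N c₁ + N c₂)
  (Nneg : ∀ c, N (-c) = N c) (Nnonneg : ∀ c, 0 ≤ N c)

/-- The body of linear functionals dominated by the sublinear functional `N`. -/
def domBody : Set (E n p) := {lam | ∀ c, polyPair lam c ≤ N c}

lemma domBody_convex : Convex ℝ (domBody N) := by
  intro a ha b hb s t hs ht hst
  intro c
  have := (polyPair_lin c).map_smul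
  have h : polyPair (s • a + t • b) c = s * polyPair a c + t * polyPair b c := by
    rw [(polyPair_lin c).map_add, (polyPair_lin c).map_smul, (polyPair_lin c).map_smul]; rfl
  rw [h]
  calc s * polyPair a c + t * polyPair b c ≤ s * N c + t * N c := by
        gcongr; exacts [ha c, hb c]
    _ = N c := by rw [← add_mul, hst, one_mul]

lemma domBody_closed : IsClosed (domBody N) := by
  have : domBody N = ⋂ c, {lam : E n p | polyPair lam c ≤ N c} := by
    ext lam; simp [domBody, Set.mem_iInter]
  rw [this]
  exact isClosed_iInter fun c => isClosed_le (continuous_polyPair c) continuous_const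

lemma domBody_zero_mem (Nnonneg : ∀ c, 0 ≤ N c) : (0 : E n p) ∈ domBody N := by
  intro c
  have : polyPair (0 : E n p) c = 0 := by simp [polyPair]
  rw [this]; exact Nnonneg c

lemma domBody_isCompact (Nnonneg : ∀ c, 0 ≤ N c) : IsCompact (domBody N) := by
  refine Metric.isCompact_of_isClosed_isBounded (domBody_closed N) ?_
  rw [Metric.isBounded_iff_subset_closedBall 0]
  set R : ℝ := ∑ m : Sym (Fin n) p, (N (Pi.single m 1) ⊔ N (-Pi.single m 1)) with hR
  have hterm : ∀ m : Sym (Fin n) p, (0:ℝ) ≤ N (Pi.single m 1) ⊔ N (-Pi.single m 1) :=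
    fun m => le_trans (Nnonneg _) le_sup_left
  have hR0 : 0 ≤ R := Finset.sum_nonneg fun m _ => hterm m
  refine ⟨R, fun lam hlam => ?_⟩
  rw [Metric.mem_closedBall, dist_zero_right, pi_norm_le_iff_of_nonneg hR0]
  intro m
  have h1 : lam m ≤ N (Pi.single m 1) := by
    have := hlam (Pi.single m 1); rwa [polyPair_single] at this
  have h2 : -lam m ≤ N (-Pi.single m 1) := by
    have h := hlam (-Pi.single m 1)
    have heq : polyPair lam (-Pi.single m 1) = - polyPair lam (Pi.single m 1) := by
      simp [polyPair, mul_neg, ← Finset.sum_neg_distrib]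
    rw [heq, polyPair_single] at h
    exact h
  have : |lam m| ≤ N (Pi.single m 1) ⊔ N (-Pi.single m 1) := by
    rw [abs_le]; constructor
    · nlinarith [le_sup_right (a := N (Pi.single m 1)) (b := N (-Pi.single m 1))]
    · exact le_trans h1 le_sup_left
  calc ‖lam m‖ = |lam m| := rfl
    _ ≤ _ := this
    _ ≤ R := Finset.single_le_sum (fun m _ => hterm m) (Finset.mem_univ m)

/-- support values of any set -/
def supp (A : Set (E n p)) (c : E n p) : ℝ := sSup ((fun lam => polyPair lam c) '' A)

lemma supp_le (Nnonneg : ∀ c, 0 ≤ N c) (c : E n p) : supp (domBody N) c ≤ N c := by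
  refine Real.sSup_le ?_ (Nnonneg c)
  rintro x ⟨lam, hlam, rfl⟩
  exact hlam c

lemma bddAbove_supp_of_compact {A : Set (E n p)} (hA : IsCompact A) (c : E n p) :
    BddAbove ((fun lam => polyPair lam c) '' A) :=
  (hA.image (continuous_polyPair c)).bddAbove

lemma supp_domBody (Nsmul : ∀ t : ℝ, 0 ≤ t → ∀ c, N (t • c) = t * N c)
    (Nadd : ∀ c₁ c₂, N (c₁ + c₂) ≤ N c₁ + N c₂)
    (Nneg : ∀ c, N (-c) = N c) (Nnonneg : ∀ c, 0 ≤ N c) (c : E n p) :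
    supp (domBody N) c = N c := by
  refine le_antisymm (supp_le N Nnonneg c) ?_
  obtain ⟨g, hg1, hg2⟩ := exists_dominated N Nsmul Nadd Nneg Nnonneg c
  set lam : E n p := fun m => g (Pi.single m 1) with hlam
  have hmem : lam ∈ domBody N := by
    intro c'
    rw [← linear_eq_polyPair g c']
    exact hg2 c'
  have : polyPair lam c = N c := by rw [← linear_eq_polyPair g c, hg1]
  rw [← this]
  exact le_csSup (bddAbove_supp_of_compact (domBody_isCompact N Nnonneg) c)
    ⟨lam, hmem, rfl⟩

/-- Key separation lemma: compact convex sets are determined by support values. -/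
lemma subset_of_supp_le {A B : Set (E n p)} (hBconv : Convex ℝ B) (hBcl : IsClosed B)
    (hBne : B.Nonempty) (hAcp : IsCompact A)
    (h : ∀ c, supp A c ≤ supp B c) : A ⊆ B := by
  intro lam hlam
  by_contra hlamB
  obtain ⟨f, u, hfu, huf⟩ := geometric_hahn_banach_closed_point hBconv hBcl hlamB
  set c : E n p := fun m => f (Pi.single m 1) with hc
  have hfc : ∀ mu : E n p, f mu = polyPair mu c := fun mu => clm_eq_polyPair f mu
  have h1 : supp B c ≤ u := by
    refine csSup_le (hBne.image _) ?_
    rintro x ⟨b, hb, rfl⟩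
    have := hfu b hb
    rw [hfc b] at this
    exact this.le
  have h2 : polyPair lam c ≤ supp A c :=
    le_csSup (bddAbove_supp_of_compact hAcp c) ⟨lam, hlam, rfl⟩
  have h3 := (h c).trans h1
  rw [hfc lam] at huf
  linarith [h2.trans h3]

lemma eq_of_supp_eq {A B : Set (E n p)} (hA : Convex ℝ A) (hAcl : IsClosed A)
    (hAne : A.Nonempty) (hAcp : IsCompact A) (hB : Convex ℝ B) (hBcl : IsClosed B)
    (hBne : B.Nonempty) (hBcp : IsCompact B)
    (h : ∀ c, supp A c = supp B c) : A = B :=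
  Set.Subset.antisymm (subset_of_supp_le hB hBcl hBne hAcp (fun c => (h c).le))
    (subset_of_supp_le hA hAcl hAne hBcp (fun c => (h c).ge))

/-- support of Minkowski sum. -/
lemma supp_add {A B : Set (E n p)} (hAne : A.Nonempty) (hBne : B.Nonempty)
    (hAcp : IsCompact A) (hBcp : IsCompact B) (c : E n p) :
    supp (A + B) c = supp A c + supp B c := by
  have himg : (fun lam => polyPair lam c) '' (A + B) =
      {x | ∃ a ∈ A, ∃ b ∈ B, x = polyPair a c + polyPair b c} := by
    ext x
    constructor
    · rintro ⟨z, ⟨a, ha, b, hb, rfl⟩, rfl⟩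
      exact ⟨a, ha, b, hb, by exact (polyPair_lin c).map_add a b⟩
    · rintro ⟨a, ha, b, hb, rfl⟩
      refine ⟨a + b, ⟨a, ha, b, hb, rfl⟩, ?_⟩
      show polyPair (a + b) c = polyPair a c + polyPair b c
      exact (polyPair_lin c).map_add a b
  rw [supp, himg]
  have hbdA := bddAbove_supp_of_compact hAcp c
  have hbdB := bddAbove_supp_of_compact hBcp c
  have hne : {x | ∃ a ∈ A, ∃ b ∈ B, x = polyPair a c + polyPair b c}.Nonempty := by
    obtain ⟨a, ha⟩ := hAne; obtain ⟨b, hb⟩ := hBne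
    exact ⟨_, a, ha, b, hb, rfl⟩
  have hbd : BddAbove {x | ∃ a ∈ A, ∃ b ∈ B, x = polyPair a c + polyPair b c} := by
    obtain ⟨MA, hMA⟩ := hbdA; obtain ⟨MB, hMB⟩ := hbdB
    refine ⟨MA + MB, ?_⟩
    rintro x ⟨a, ha, b, hb, rfl⟩
    exact add_le_add (hMA ⟨a, ha, rfl⟩) (hMB ⟨b, hb, rfl⟩)
  apply le_antisymm
  · refine csSup_le hne ?_
    rintro x ⟨a, ha, b, hb, rfl⟩
    exact add_le_add (le_csSup hbdA ⟨a, ha, rfl⟩) (le_csSup hbdB ⟨b, hb, rfl⟩)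
  · have hstep : supp A c ≤ sSup {x | ∃ a ∈ A, ∃ b ∈ B, x = polyPair a c + polyPair b c}
        - supp B c := by
      refine csSup_le (hAne.image _) ?_
      rintro x ⟨a, ha, rfl⟩
      rw [le_sub_iff_add_le, add_comm, ← le_sub_iff_add_le]
      refine csSup_le (hBne.image _) ?_
      rintro y ⟨b, hb, rfl⟩
      rw [le_sub_iff_add_le, add_comm]
      exact le_csSup hbd ⟨a, ha, b, hb, rfl⟩
    linarith
/-- Euclidean norm on coefficient space. -/
def en (c : E n p) : ℝ := Real.sqrt (∑ m : Sym (Fin n) p, (c m)^2)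

lemma en_nonneg (c : E n p) : 0 ≤ en c := Real.sqrt_nonneg _

lemma polyPair_self (c : E n p) : polyPair c c = (en c)^2 := by
  rw [en, Real.sq_sqrt (Finset.sum_nonneg fun m _ => sq_nonneg _)]
  simp [polyPair, sq]

lemma polyPair_le_en (a b : E n p) : polyPair a b ≤ en a * en b := by
  have h := Finset.sum_mul_sq_le_sq_mul_sq Finset.univ a b
  calc polyPair a b ≤ |polyPair a b| := le_abs_self _
    _ = Real.sqrt ((polyPair a b)^2) := (Real.sqrt_sq_eq_abs _).symm
    _ ≤ Real.sqrt ((∑ m : Sym (Fin n) p, (a m)^2) * ∑ m : Sym (Fin n) p, (b m)^2) :=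
        Real.sqrt_le_sqrt h
    _ = en a * en b := Real.sqrt_mul (Finset.sum_nonneg fun m _ => sq_nonneg _) _

lemma norm_le_en (c : E n p) : ‖c‖ ≤ en c := by
  rcases isEmpty_or_nonempty (Sym (Fin n) p) with h | h
  · have : c = 0 := by ext m; exact h.elim m
    simp [this, en]
  refine (pi_norm_le_iff_of_nonneg (en_nonneg c)).2 fun m => ?_
  calc ‖c m‖ = Real.sqrt ((c m)^2) := (Real.sqrt_sq_eq_abs _).symm
    _ ≤ en c := Real.sqrt_le_sqrt (Finset.single_le_sum (fun i _ => sq_nonneg (c i))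
        (Finset.mem_univ m))

lemma en_smul (t : ℝ) (c : E n p) : en (t • c) = |t| * en c := by
  unfold en
  rw [show ∑ m : Sym (Fin n) p, ((t • c) m)^2 = t^2 * ∑ m : Sym (Fin n) p, (c m)^2 by
    simp [Finset.mul_sum, mul_pow]]
  rw [Real.sqrt_mul (sq_nonneg t), Real.sqrt_sq_eq_abs]

lemma en_add_le (a b : E n p) : en (a + b) ≤ en a + en b := by
  have h2 : (en (a+b))^2 ≤ (en a + en b)^2 := by
    rw [← polyPair_self]
    have key : ∀ m : Sym (Fin n) p, (a m + b m) * (a m + b m) =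
        a m * a m + 2 * (a m * b m) + b m * b m := fun m => by ring
    have : polyPair (a+b) (a+b) = polyPair a a + 2 * polyPair a b + polyPair b b := by
      simp only [polyPair, Pi.add_apply, key, Finset.sum_add_distrib, ← Finset.mul_sum]
    rw [this, polyPair_self, polyPair_self]
    nlinarith [polyPair_le_en a b]
  calc en (a + b) = Real.sqrt ((en (a+b))^2) := (Real.sqrt_sq (en_nonneg _)).symm
    _ ≤ Real.sqrt ((en a + en b)^2) := Real.sqrt_le_sqrt h2
    _ = en a + en b := Real.sqrt_sq (add_nonneg (en_nonneg a) (en_nonneg b))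

lemma continuous_en : Continuous (en (n:=n) (p:=p)) :=
  (continuous_finset_sum _ fun m _ => ((continuous_apply m).pow 2)).sqrt

def enBall (ε : ℝ) : Set (E n p) := {v | en v ≤ ε}

lemma enBall_convex (ε : ℝ) : Convex ℝ (enBall (n:=n) (p:=p) ε) := by
  intro a ha b hb s t hs ht hst
  have : en (s • a + t • b) ≤ s * en a + t * en b := by
    calc en (s • a + t • b) ≤ en (s • a) + en (t • b) := en_add_le _ _
      _ = s * en a + t * en b := by rw [en_smul, en_smul, abs_of_nonneg hs, abs_of_nonneg ht]
  calc en (s • a + t • b) ≤ s * en a + t * en b := this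
    _ ≤ s * ε + t * ε := by gcongr; exacts [ha, hb]
    _ = ε := by rw [← add_mul, hst, one_mul]

lemma enBall_compact (ε : ℝ) : IsCompact (enBall (n:=n) (p:=p) ε) := by
  refine Metric.isCompact_of_isClosed_isBounded
    (isClosed_le continuous_en continuous_const) ?_
  rw [Metric.isBounded_iff_subset_closedBall 0]
  refine ⟨max ε 0, fun v hv => ?_⟩
  rw [Metric.mem_closedBall, dist_zero_right]
  exact le_trans (le_trans (norm_le_en v) hv) (le_max_left _ _)

lemma enBall_zero_mem {ε : ℝ} (hε : 0 ≤ ε) : (0 : E n p) ∈ enBall ε := by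
  have : en (0 : E n p) = 0 := by simp [en]
  simp [enBall, this, hε]

/-- Key geometric step: support control yields pointwise approximation. -/
lemma exists_close {A B : Set (E n p)} (hBconv : Convex ℝ B)
    (hBne : B.Nonempty) (hAcp : IsCompact A) (hBcp : IsCompact B) {ε : ℝ} (hε : 0 ≤ ε)
    (h : ∀ c, supp A c ≤ supp B c + ε * en c) :
    ∀ lam ∈ A, ∃ mu ∈ B, dist lam mu ≤ ε := by
  intro lam hlam
  have hS : lam ∈ B + enBall ε := by
    by_contra hlamS
    have hScp : IsCompact (B + enBall (n:=n) (p:=p) ε) := hBcp.add (enBall_compact ε)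
    have hSconv : Convex ℝ (B + enBall (n:=n) (p:=p) ε) := hBconv.add (enBall_convex ε)
    obtain ⟨f, u, hfu, huf⟩ := geometric_hahn_banach_closed_point hSconv hScp.isClosed hlamS
    set c : E n p := fun m => f (Pi.single m 1) with hc
    have hfc : ∀ mu : E n p, f mu = polyPair mu c := fun mu => clm_eq_polyPair f mu
    by_cases hc0 : c = 0
    · obtain ⟨b, hb⟩ := hBne
      have h1 := hfu (b + 0) ⟨b, hb, 0, enBall_zero_mem hε, rfl⟩
      have e1 : f (b + 0) = 0 := by rw [hfc]; simp [hc0, polyPair]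
      have e2 : f lam = 0 := by rw [hfc]; simp [hc0, polyPair]
      rw [e1] at h1; rw [e2] at huf; linarith
    · set v₀ : E n p := (ε / en c) • c with hv₀
      have henc : 0 < en c := by
        rcases (en_nonneg c).lt_or_eq with h' | h'
        · exact h'
        · exfalso; apply hc0
          have : ∑ m : Sym (Fin n) p, (c m)^2 = 0 := by
            have := h'.symm
            rw [en] at this
            nlinarith [Real.sq_sqrt (Finset.sum_nonneg fun m (_ : m ∈ Finset.univ) =>
              sq_nonneg (c m)), Real.sqrt_nonneg (∑ m : Sym (Fin n) p, (c m)^2)]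
          ext m
          have := (Finset.sum_eq_zero_iff_of_nonneg
            (fun i (_ : i ∈ Finset.univ) => sq_nonneg (c i))).1 this m (Finset.mem_univ m)
          exact pow_eq_zero_iff (by norm_num) |>.1 this
      have hv₀mem : v₀ ∈ enBall (n:=n) (p:=p) ε := by
        show en v₀ ≤ ε
        rw [hv₀, en_smul, abs_of_nonneg (div_nonneg hε henc.le), div_mul_cancel₀]
        exact henc.ne'
      have hv₀pp : polyPair v₀ c = ε * en c := by
        rw [hv₀]
        have : polyPair ((ε / en c) • c) c = (ε / en c) * polyPair c c := by
          have := (polyPair_lin c).map_smul (ε / en c) c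
          simpa using this
        rw [this, polyPair_self]
        field_simp
      have hBbound : ∀ b ∈ B, polyPair b c ≤ u - ε * en c := by
        intro b hb
        have := hfu (b + v₀) ⟨b, hb, v₀, hv₀mem, rfl⟩
        rw [hfc, (polyPair_lin c).map_add, hv₀pp] at this
        linarith
      have hsuppB : supp B c ≤ u - ε * en c := by
        refine csSup_le (hBne.image _) ?_
        rintro x ⟨b, hb, rfl⟩
        exact hBbound b hb
      have h1 : supp A c ≤ u := by linarith [h c, hsuppB]
      have h2 : polyPair lam c ≤ supp A c :=
        le_csSup (bddAbove_supp_of_compact hAcp c) ⟨lam, hlam, rfl⟩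
      rw [hfc lam] at huf
      linarith
  obtain ⟨mu, hmu, v, hv, rfl⟩ := hS
  refine ⟨mu, hmu, ?_⟩
  rw [dist_eq_norm]
  have : mu + v - mu = v := by abel
  rw [this]
  exact le_trans (norm_le_en v) hv


lemma abs_coord_le_en (c : E n p) (m : Sym (Fin n) p) : |c m| ≤ en c :=
  le_trans (norm_le_pi_norm c m) (norm_le_en c)
/-- Homothety inclusion: if every point of `K` is within `θ*r` of the convex closed `L`,
and `K` contains a ball of radius `r`, then the shrunk copy of `K` is inside `L`. -/
lemma homothety_subset {L K : Set (Rn n)} (hLconv : Convex ℝ L) (hLcl : IsClosed L)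
    (hLne : L.Nonempty) {x₀ : Rn n} {r : ℝ} (hr : 0 < r)
    (hball : closedBall x₀ r ⊆ K) (hKconv : Convex ℝ K) {θ : ℝ} (hθ : 0 < θ) (hθ1 : θ ≤ 1)
    (hKL : ∀ y ∈ K, ∃ l ∈ L, dist y l ≤ θ * r) :
    ∀ y ∈ K, (1 - θ) • y + θ • x₀ ∈ L := by
  intro y hy
  by_contra hz
  obtain ⟨f, s, hfl, hsz⟩ := geometric_hahn_banach_closed_point hLconv hLcl hz
  set α : ℝ := sSup (f '' closedBall (0 : Rn n) 1) with hα
  have hbdd : BddAbove (f '' closedBall (0 : Rn n) 1) :=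
    ((isCompact_closedBall _ _).image f.continuous).bddAbove
  have hα0 : 0 ≤ α := by
    have : (0:ℝ) = f 0 := by simp
    exact this ▸ le_csSup hbdd ⟨0, mem_closedBall_self zero_le_one, rfl⟩
  have hf_le : ∀ w : Rn n, f w ≤ ‖w‖ * α := by
    intro w
    rcases eq_or_ne w 0 with rfl | hw
    · simp
    · have h1 : f w = ‖w‖ * f (‖w‖⁻¹ • w) := by
        rw [_root_.map_smul, smul_eq_mul, ← mul_assoc, mul_inv_cancel₀ (norm_ne_zero_iff.2 hw), one_mul]
      have h2 : f (‖w‖⁻¹ • w) ≤ α := by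
        refine le_csSup hbdd ⟨_, ?_, rfl⟩
        simp [norm_smul, abs_of_nonneg (inv_nonneg.2 (norm_nonneg w)),
          inv_mul_cancel₀ (norm_ne_zero_iff.2 hw)]
      rw [h1]
      exact mul_le_mul_of_nonneg_left h2 (norm_nonneg w)
  have hKbound : ∀ y' ∈ K, f y' ≤ s + (θ * r) * α := by
    intro y' hy'
    obtain ⟨l, hl, hdist⟩ := hKL y' hy'
    have : f y' = f l + f (y' - l) := by rw [← map_add]; congr 1; abel
    rw [this]
    have h1 : f (y' - l) ≤ ‖y' - l‖ * α := hf_le _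
    have h2 : ‖y' - l‖ ≤ θ * r := by rwa [← dist_eq_norm]
    have := hfl l hl
    nlinarith
  have hαsup : α * r ≤ s + θ * r * α - f x₀ := by
    have h1 : ∀ u : Rn n, ‖u‖ ≤ 1 → f u ≤ (s + θ * r * α - f x₀) / r := by
      intro u hu
      have hmem : x₀ + r • u ∈ K := by
        apply hball
        rw [mem_closedBall]
        have : dist (x₀ + r • u) x₀ = r * ‖u‖ := by
          rw [dist_eq_norm]
          have : x₀ + r • u - x₀ = r • u := by abel
          rw [this, norm_smul, Real.norm_eq_abs, abs_of_nonneg hr.le]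
        rw [this]
        nlinarith
      have := hKbound _ hmem
      rw [map_add, _root_.map_smul, smul_eq_mul] at this
      rw [le_div_iff₀ hr]
      linarith
    have : α ≤ (s + θ * r * α - f x₀) / r := by
      refine csSup_le ⟨f 0, ⟨0, mem_closedBall_self zero_le_one, rfl⟩⟩ ?_
      rintro x ⟨u, hu, rfl⟩
      exact h1 u (by simpa [mem_closedBall, dist_zero_right] using hu)
    calc α * r ≤ ((s + θ * r * α - f x₀) / r) * r := by nlinarith
      _ = s + θ * r * α - f x₀ := by field_simp
  have hfz : f ((1 - θ) • y + θ • x₀) = (1 - θ) * f y + θ * f x₀ := by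
    rw [map_add, _root_.map_smul, _root_.map_smul]; rfl
  have hfy := hKbound y hy
  rw [hfz] at hsz
  nlinarith [hsz, hfy, hαsup, hα0]

variable {n : ℕ}

lemma hausdorffEdist_ne_top (K L : ConvexBody (Rn n)) :
    EMetric.hausdorffEdist (K : Set (Rn n)) (L : Set (Rn n)) ≠ ⊤ :=
  hausdorffEdist_ne_top_of_nonempty_of_bounded K.nonempty L.nonempty
    K.isCompact.isBounded L.isCompact.isBounded

lemma subset_cthickening_of_dist_le {K L : ConvexBody (Rn n)} {δ : ℝ}
    (h : dist L K ≤ δ) : (L : Set (Rn n)) ⊆ cthickening δ (K : Set (Rn n)) := by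
  intro x hx
  obtain ⟨y, hy, hxy⟩ := K.isCompact.exists_infDist_eq_dist K.nonempty x
  refine mem_cthickening_of_dist_le x y δ _ hy ?_
  rw [← hxy]
  calc infDist x (K : Set (Rn n)) ≤ hausdorffDist (L : Set (Rn n)) (K : Set (Rn n)) :=
      infDist_le_hausdorffDist_of_mem hx (hausdorffEdist_ne_top L K)
    _ = dist L K := ConvexBody.hausdorffDist_coe L K
    _ ≤ δ := h

lemma volume_coe_lt_top (K : ConvexBody (Rn n)) : volume (K : Set (Rn n)) < ⊤ :=
  K.isCompact.measure_lt_top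

lemma partA (K : ConvexBody (Rn n)) {ε' : ℝ} (hε' : 0 < ε') :
    ∃ δ > 0, ∀ L : ConvexBody (Rn n), dist L K ≤ δ →
      (volume ((L : Set (Rn n)) \ (K : Set (Rn n)))).toReal ≤ ε' := by
  have hfin : volume (cthickening 1 (K : Set (Rn n))) ≠ ⊤ := by
    have hbd : Bornology.IsBounded (cthickening 1 (K : Set (Rn n))) :=
      K.isCompact.isBounded.cthickening
    obtain ⟨R, hR⟩ := (Metric.isBounded_iff_subset_closedBall 0).1 hbd
    exact ((measure_mono hR).trans_lt (isCompact_closedBall _ _).measure_lt_top).ne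
  have htend := tendsto_measure_cthickening_of_isClosed (μ := volume)
    ⟨1, one_pos, hfin⟩ K.isClosed
  have hlt : volume (K : Set (Rn n)) < volume (K : Set (Rn n)) + ENNReal.ofReal ε' :=
    ENNReal.lt_add_right (volume_coe_lt_top K).ne (by simp [hε'])
  have hev : ∀ᶠ r in nhds (0:ℝ),
      volume (cthickening r (K : Set (Rn n))) < volume (K : Set (Rn n)) + ENNReal.ofReal ε' :=
    htend.eventually_lt_const hlt
  obtain ⟨e, he, hprop⟩ := Metric.eventually_nhds_iff.1 hev
  refine ⟨e/2, by linarith, fun L hL => ?_⟩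
  have h1 : volume (cthickening (e/2) (K : Set (Rn n)))
      < volume (K : Set (Rn n)) + ENNReal.ofReal ε' := by
    apply hprop
    rw [Real.dist_eq, sub_zero, abs_of_nonneg (by linarith)]
    linarith
  have hsub : (L : Set (Rn n)) \ (K : Set (Rn n)) ⊆
      cthickening (e/2) (K : Set (Rn n)) \ (K : Set (Rn n)) :=
    Set.diff_subset_diff_left (subset_cthickening_of_dist_le hL)
  have h2 : volume ((L : Set (Rn n)) \ (K : Set (Rn n))) ≤ ENNReal.ofReal ε' := by
    calc volume ((L : Set (Rn n)) \ (K : Set (Rn n)))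
        ≤ volume (cthickening (e/2) (K : Set (Rn n)) \ (K : Set (Rn n))) := measure_mono hsub
      _ = volume (cthickening (e/2) (K : Set (Rn n))) - volume (K : Set (Rn n)) := by
          rw [measure_diff (self_subset_cthickening _)
            K.isClosed.measurableSet.nullMeasurableSet (volume_coe_lt_top K).ne]
      _ ≤ ENNReal.ofReal ε' := by
          rw [tsub_le_iff_right, add_comm]
          exact h1.le
  exact ENNReal.toReal_le_of_le_ofReal hε'.le h2

lemma partB (K : ConvexBody (Rn n)) {ε' : ℝ} (hε' : 0 < ε') :
    ∃ δ > 0, ∀ L : ConvexBody (Rn n), dist L K ≤ δ →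
      (volume ((K : Set (Rn n)) \ (L : Set (Rn n)))).toReal ≤ ε' := by
  by_cases hμ : volume (K : Set (Rn n)) = 0
  · refine ⟨1, one_pos, fun L _ => ?_⟩
    have : volume ((K : Set (Rn n)) \ (L : Set (Rn n))) = 0 :=
      le_antisymm (le_trans (measure_mono Set.diff_subset) hμ.le) zero_le
    simp [this, hε'.le]
  · -- K has nonempty interior
    have hint : (interior (K : Set (Rn n))).Nonempty := by
      by_contra h
      apply hμ
      have hfr : frontier (K : Set (Rn n)) = (K : Set (Rn n)) := by
        rw [frontier, closure_eq_iff_isClosed.2 K.isClosed,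
          Set.not_nonempty_iff_eq_empty.1 h, Set.diff_empty]
      have := K.convex.addHaar_frontier volume
      rwa [hfr] at this
    obtain ⟨x₀, hx₀⟩ := hint
    obtain ⟨r, hr, hball⟩ := Metric.isOpen_iff.1 isOpen_interior x₀ hx₀
    have hball2 : closedBall x₀ (r/2) ⊆ (K : Set (Rn n)) :=
      (closedBall_subset_ball (by linarith)).trans (hball.trans interior_subset)
    have hx₀K : x₀ ∈ (K : Set (Rn n)) := interior_subset hx₀
    set d : ℕ := Module.finrank ℝ (Rn n) with hd
    set V : ℝ := (volume (K : Set (Rn n))).toReal with hV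
    have hVpos : 0 ≤ V := ENNReal.toReal_nonneg
    -- choose θ
    have hcont : Continuous (fun θ : ℝ => V * (1 - (1-θ)^d)) := by continuity
    have htend0 : Filter.Tendsto (fun θ : ℝ => V * (1 - (1-θ)^d)) (nhds 0)
        (nhds (V * (1 - (1-(0:ℝ))^d))) := hcont.tendsto 0
    have hev : ∀ᶠ θ in nhds (0:ℝ), V * (1 - (1-θ)^d) < ε' := by
      apply htend0.eventually_lt_const
      simp [hε']
    obtain ⟨e, he, hprop⟩ := Metric.eventually_nhds_iff.1 hev
    set θ : ℝ := min (e/2) (1/2) with hθdef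
    have hθpos : 0 < θ := lt_min (by linarith) (by norm_num)
    have hθ1 : θ ≤ 1/2 := min_le_right _ _
    have hθe : V * (1 - (1-θ)^d) < ε' := by
      apply hprop
      rw [Real.dist_eq, sub_zero, abs_of_pos hθpos]
      calc θ ≤ e/2 := min_le_left _ _
        _ < e := by linarith
    refine ⟨θ * (r/2), by positivity, fun L hL => ?_⟩
    -- every point of K is close to L
    have hKL : ∀ y ∈ (K : Set (Rn n)), ∃ l ∈ (L : Set (Rn n)), dist y l ≤ θ * (r/2) := by
      intro y hy
      obtain ⟨l, hl, hyl⟩ := L.isCompact.exists_infDist_eq_dist L.nonempty y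
      refine ⟨l, hl, ?_⟩
      rw [← hyl]
      calc infDist y (L : Set (Rn n)) ≤ hausdorffDist (K : Set (Rn n)) (L : Set (Rn n)) :=
          infDist_le_hausdorffDist_of_mem hy (hausdorffEdist_ne_top K L)
        _ = dist K L := ConvexBody.hausdorffDist_coe K L
        _ = dist L K := dist_comm _ _
        _ ≤ θ * (r/2) := hL
    have hshrink := homothety_subset L.convex L.isClosed L.nonempty (by linarith : (0:ℝ) < r/2)
      hball2 K.convex hθpos (by linarith) hKL
    set K' : Set (Rn n) := AffineMap.homothety x₀ (1-θ) '' (K : Set (Rn n)) with hK'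
    have hK'L : K' ⊆ (L : Set (Rn n)) := by
      rintro z ⟨y, hy, rfl⟩
      have heq : AffineMap.homothety x₀ (1-θ) y = (1 - θ) • y + θ • x₀ := by
        simp [AffineMap.homothety_apply]
        module
      rw [heq]
      exact hshrink y hy
    have hK'K : K' ⊆ (K : Set (Rn n)) := by
      rintro z ⟨y, hy, rfl⟩
      have heq : AffineMap.homothety x₀ (1-θ) y = (1 - θ) • y + θ • x₀ := by
        simp [AffineMap.homothety_apply]
        module
      rw [heq]
      exact K.convex hy hx₀K (by linarith) hθpos.le (by ring)
    have hK'meas : volume K' = ENNReal.ofReal ((1-θ)^d) * volume (K : Set (Rn n)) := by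
      rw [hK', MeasureTheory.Measure.addHaar_image_homothety volume x₀ (1-θ) (K : Set (Rn n)), abs_of_nonneg (pow_nonneg (by linarith : (0:ℝ) ≤ 1-θ) d)]
    have hK'cp : IsCompact K' :=
      K.isCompact.image (AffineMap.homothety_continuous x₀ (1-θ))
    have hdiff : volume ((K : Set (Rn n)) \ (L : Set (Rn n)))
        ≤ volume ((K : Set (Rn n)) \ K') := measure_mono (Set.diff_subset_diff_right hK'L)
    have hdiff2 : volume ((K : Set (Rn n)) \ K')
        = volume (K : Set (Rn n)) - volume K' := by
      rw [measure_diff hK'K hK'cp.isClosed.measurableSet.nullMeasurableSet]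
      rw [hK'meas]
      exact ENNReal.mul_ne_top ENNReal.ofReal_ne_top (volume_coe_lt_top K).ne
    have hfinal : (volume ((K : Set (Rn n)) \ (L : Set (Rn n)))).toReal
        ≤ V - (1-θ)^d * V := by
      have h1 : (volume ((K : Set (Rn n)) \ (L : Set (Rn n)))).toReal
          ≤ (volume (K : Set (Rn n)) - volume K').toReal := by
        apply ENNReal.toReal_mono
        · exact (tsub_le_self.trans_lt (volume_coe_lt_top K)).ne
        · exact hdiff.trans hdiff2.le
      refine h1.trans ?_
      have hle : volume K' ≤ volume (K : Set (Rn n)) := measure_mono hK'K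
      rw [ENNReal.toReal_sub_of_le hle (volume_coe_lt_top K).ne, hK'meas, ENNReal.toReal_mul,
        ENNReal.toReal_ofReal (pow_nonneg (by linarith : (0:ℝ) ≤ 1-θ) d)]
    calc (volume ((K : Set (Rn n)) \ (L : Set (Rn n)))).toReal ≤ V - (1-θ)^d * V := hfinal
      _ = V * (1 - (1-θ)^d) := by ring
      _ ≤ ε' := hθe.le

/-- Measure continuity of convex bodies. -/
lemma meas_diff_small (K : ConvexBody (Rn n)) {ε' : ℝ} (hε' : 0 < ε') :
    ∃ δ > 0, ∀ L : ConvexBody (Rn n), dist L K ≤ δ →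
      (volume ((L : Set (Rn n)) \ (K : Set (Rn n)))).toReal ≤ ε' ∧
      (volume ((K : Set (Rn n)) \ (L : Set (Rn n)))).toReal ≤ ε' := by
  obtain ⟨δ₁, hδ₁, h₁⟩ := partA K hε'
  obtain ⟨δ₂, hδ₂, h₂⟩ := partB K hε'
  exact ⟨min δ₁ δ₂, lt_min hδ₁ hδ₂, fun L hL =>
    ⟨h₁ L (hL.trans (min_le_left _ _)), h₂ L (hL.trans (min_le_right _ _))⟩⟩

lemma abs_polyEval_le {R : ℝ} (hR : 0 ≤ R) (c : E n p) {x : Rn n}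
    (hx : x ∈ closedBall (0 : Rn n) R) :
    |polyEval c x| ≤ (Fintype.card (Sym (Fin n) p) * R ^ p) * en c := by
  have hxR : ∀ i, |x i| ≤ R := by
    intro i
    calc |x i| = ‖x i‖ := rfl
      _ ≤ ‖x‖ := norm_le_pi_norm x i
      _ ≤ R := by rwa [mem_closedBall, dist_zero_right] at hx
  have hmon : ∀ m : Sym (Fin n) p, |((m : Multiset (Fin n)).map x).prod| ≤ R ^ p := by
    intro m
    have hgen : ∀ s : Multiset (Fin n), |(s.map x).prod| ≤ R ^ (Multiset.card s) := by
      intro s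
      induction s using Multiset.induction_on with
      | empty => simp
      | cons a s ih =>
          simp only [Multiset.map_cons, Multiset.prod_cons, Multiset.card_cons, abs_mul, pow_succ]
          rw [mul_comm (R ^ Multiset.card s) R]
          exact mul_le_mul (hxR a) ih (abs_nonneg _) hR
    have hcard : Multiset.card (m : Multiset (Fin n)) = p := m.prop
    have := hgen (m : Multiset (Fin n))
    rwa [hcard] at this
  calc |polyEval c x| ≤ ∑ m : Sym (Fin n) p, |c m * ((m : Multiset (Fin n)).map x).prod| :=
      Finset.abs_sum_le_sum_abs _ _
    _ ≤ ∑ _m : Sym (Fin n) p, R ^ p * en c := by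
        refine Finset.sum_le_sum fun m _ => ?_
        rw [abs_mul]
        calc |c m| * |((m : Multiset (Fin n)).map x).prod| ≤ en c * R ^ p :=
            mul_le_mul (abs_coord_le_en c m) (hmon m) (abs_nonneg _) (en_nonneg c)
          _ = R ^ p * en c := mul_comm _ _
    _ = (Fintype.card (Sym (Fin n) p) * R ^ p) * en c := by
        rw [Finset.sum_const, Finset.card_univ, nsmul_eq_mul]; ring

lemma setIntegral_abs_polyEval_le {R : ℝ} (hR : 0 ≤ R) (c : E n p) {s : Set (Rn n)}
    (hs : s ⊆ closedBall (0 : Rn n) R) (hsm : MeasurableSet s) :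
    ∫ x in s, |polyEval c x| ≤
      (volume s).toReal * ((Fintype.card (Sym (Fin n) p) * R ^ p) * en c) := by
  have hfin : volume s < ⊤ :=
    (measure_mono hs).trans_lt (isCompact_closedBall _ _).measure_lt_top
  have key := norm_setIntegral_le_of_norm_le_const (μ := volume) hfin
    (C := (Fintype.card (Sym (Fin n) p) * R ^ p) * en c)
    (f := fun x => |polyEval c x|)
    (fun x hx => by
      rw [Real.norm_eq_abs, abs_abs]
      exact abs_polyEval_le hR c (hs hx))
  calc ∫ x in s, |polyEval c x| ≤ ‖∫ x in s, |polyEval c x|‖ := le_abs_self _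
    _ ≤ _ := by
        rw [mul_comm ((volume s).toReal)]
        exact key

/-- The key continuity estimate for `HH`. -/
lemma HH_close (K : ConvexBody (Rn n)) {ε : ℝ} (hε : 0 < ε) :
    ∃ δ > 0, ∀ L : ConvexBody (Rn n), dist L K ≤ δ →
      ∀ c : E n p, |HH L c - HH K c| ≤ ε * en c := by
  obtain ⟨R₀, hR₀⟩ := (isBounded_iff_subset_closedBall 0).1 K.isCompact.isBounded
  set R : ℝ := max R₀ 0 + 1 with hRdef
  have hR : 0 ≤ R := by positivity
  have hKR : (K : Set (Rn n)) ⊆ closedBall 0 (max R₀ 0) :=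
    hR₀.trans (closedBall_subset_closedBall (le_max_left _ _))
  have hKR' : (K : Set (Rn n)) ⊆ closedBall 0 R :=
    hKR.trans (closedBall_subset_closedBall (by linarith))
  set M : ℝ := Fintype.card (Sym (Fin n) p) * R ^ p with hM
  have hM0 : 0 ≤ M := by positivity
  set ε' : ℝ := ε / (2 * (M + 1)) with hε'def
  have hε' : 0 < ε' := by positivity
  obtain ⟨δ₀, hδ₀, hδprop⟩ := meas_diff_small K hε'
  refine ⟨min δ₀ 1, lt_min hδ₀ one_pos, fun L hL c => ?_⟩
  have hLsub : (L : Set (Rn n)) ⊆ closedBall 0 R := by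
    have h1 : (L : Set (Rn n)) ⊆ cthickening 1 (K : Set (Rn n)) :=
      subset_cthickening_of_dist_le (hL.trans (min_le_right _ _))
    have h2 : cthickening 1 (K : Set (Rn n)) ⊆ cthickening 1 (closedBall 0 (max R₀ 0)) :=
      cthickening_subset_of_subset _ hKR
    rw [cthickening_closedBall one_pos.le (le_max_right _ _)] at h2
    exact h1.trans (h2.trans (closedBall_subset_closedBall (by rw [hRdef]; linarith)))
  obtain ⟨hLK, hKL⟩ := hδprop L (hL.trans (min_le_left _ _))
  -- decompose
  have hKm : MeasurableSet (K : Set (Rn n)) := K.isClosed.measurableSet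
  have hLm : MeasurableSet (L : Set (Rn n)) := L.isClosed.measurableSet
  have hdecomp : ∀ (A B : ConvexBody (Rn n)),
      HH A c = (∫ x in ((A : Set (Rn n)) ∩ B), |polyEval c x|)
        + ∫ x in ((A : Set (Rn n)) \ B), |polyEval c x| := by
    intro A B
    have hsplit : (A : Set (Rn n)) = ((A : Set (Rn n)) ∩ B) ∪ ((A : Set (Rn n)) \ B) :=
      (Set.inter_union_diff _ _).symm
    rw [HH]
    conv_lhs => rw [hsplit]
    rw [setIntegral_union]
    · exact Set.disjoint_left.2 fun x hx1 hx2 => hx2.2 hx1.2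
    · exact A.isClosed.measurableSet.diff B.isClosed.measurableSet
    · exact (integrableOn_abs_polyEval c A.isCompact).mono_set Set.inter_subset_left
    · exact (integrableOn_abs_polyEval c A.isCompact).mono_set Set.diff_subset
  have heq : HH L c - HH K c = (∫ x in ((L : Set (Rn n)) \ K), |polyEval c x|)
      - ∫ x in ((K : Set (Rn n)) \ L), |polyEval c x| := by
    rw [hdecomp L K, hdecomp K L, Set.inter_comm (L : Set (Rn n)) (K : Set (Rn n))]
    ring
  have hb1 : ∫ x in ((L : Set (Rn n)) \ K), |polyEval c x| ≤ ε' * (M * en c) := by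
    calc ∫ x in ((L : Set (Rn n)) \ K), |polyEval c x|
        ≤ (volume ((L : Set (Rn n)) \ K)).toReal * (M * en c) :=
          setIntegral_abs_polyEval_le hR c (Set.diff_subset.trans hLsub) (hLm.diff hKm)
      _ ≤ ε' * (M * en c) := by
          apply mul_le_mul_of_nonneg_right hLK
          exact mul_nonneg hM0 (en_nonneg c)
  have hb2 : ∫ x in ((K : Set (Rn n)) \ L), |polyEval c x| ≤ ε' * (M * en c) := by
    calc ∫ x in ((K : Set (Rn n)) \ L), |polyEval c x|
        ≤ (volume ((K : Set (Rn n)) \ L)).toReal * (M * en c) :=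
          setIntegral_abs_polyEval_le hR c (Set.diff_subset.trans hKR') (hKm.diff hLm)
      _ ≤ ε' * (M * en c) := by
          apply mul_le_mul_of_nonneg_right hKL
          exact mul_nonneg hM0 (en_nonneg c)
  have hpos1 : 0 ≤ ∫ x in ((L : Set (Rn n)) \ K), |polyEval c x| :=
    integral_nonneg fun x => abs_nonneg _
  have hpos2 : 0 ≤ ∫ x in ((K : Set (Rn n)) \ L), |polyEval c x| :=
    integral_nonneg fun x => abs_nonneg _
  rw [heq, abs_le]
  constructor
  · have : ε' * (M * en c) ≤ ε * en c := by
      rw [hε'def]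
      have h1 : ε / (2 * (M + 1)) * (M * en c) ≤ ε / 2 * en c := by
        rw [div_mul_eq_mul_div, div_mul_eq_mul_div, div_le_div_iff₀ (by positivity) (by norm_num)]
        have := en_nonneg c
        nlinarith
      nlinarith [en_nonneg c]
    linarith
  · have : ε' * (M * en c) ≤ ε * en c := by
      rw [hε'def]
      have h1 : ε / (2 * (M + 1)) * (M * en c) ≤ ε / 2 * en c := by
        rw [div_mul_eq_mul_div, div_mul_eq_mul_div, div_le_div_iff₀ (by positivity) (by norm_num)]
        have := en_nonneg c
        nlinarith
      nlinarith [en_nonneg c]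
    linarith

lemma stdRep_det (T : Matrix.SpecialLinearGroup (Fin n) ℝ) :
    LinearMap.det (stdRep T) = 1 := by
  rw [stdRep, ← Matrix.toLin'_apply', LinearMap.det_toLin']
  exact T.prop

lemma stdRep_measurePreserving (T : Matrix.SpecialLinearGroup (Fin n) ℝ) :
    MeasurePreserving (stdRep T) (volume : Measure (Rn n)) volume := by
  constructor
  · exact (stdRep T).continuous_of_finiteDimensional.measurable
  · rw [Real.map_linearMap_volume_pi_eq_smul_volume_pi (by rw [stdRep_det]; norm_num)]
    simp [stdRep_det]

lemma stdRep_measurableEmbedding (T : Matrix.SpecialLinearGroup (Fin n) ℝ) :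
    MeasurableEmbedding (stdRep T) := by
  have hdet : LinearMap.det (stdRep T) ≠ 0 := by rw [stdRep_det]; norm_num
  let e : Rn n ≃ₗ[ℝ] Rn n := LinearEquiv.ofIsUnitDet (f := stdRep T) (v := Pi.basisFun ℝ (Fin n))
    (v' := Pi.basisFun ℝ (Fin n)) ?_
  · have : (stdRep T : Rn n → Rn n) = e := rfl
    rw [this]
    exact e.toContinuousLinearEquiv.toHomeomorph.measurableEmbedding
  · rw [LinearMap.det_toMatrix]
    exact isUnit_iff_ne_zero.2 hdet

lemma setIntegral_image_stdRep (T : Matrix.SpecialLinearGroup (Fin n) ℝ)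
    (g : Rn n → ℝ) (K : Set (Rn n)) :
    ∫ y in (stdRep T) '' K, g y = ∫ x in K, g (stdRep T x) :=
  (stdRep_measurePreserving T).setIntegral_image_emb (stdRep_measurableEmbedding T) g K

lemma HH_sublinear (K : ConvexBody (Rn n)) :
    (∀ t : ℝ, 0 ≤ t → ∀ c : E n p, HH K (t • c) = t * HH K c) ∧
    (∀ c₁ c₂ : E n p, HH K (c₁ + c₂) ≤ HH K c₁ + HH K c₂) :=
  ⟨fun t ht c => HH_smul K ht c, HH_add_le K⟩

/-- The body `Γ_p K`. -/
def Gamma (K : ConvexBody (Rn n)) : ConvexBody (E n p) :=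
  ⟨domBody (HH K), domBody_convex _, domBody_isCompact _ (HH_nonneg K),
    ⟨0, domBody_zero_mem _ (HH_nonneg K)⟩⟩

lemma supp_Gamma (K : ConvexBody (Rn n)) (c : E n p) :
    supp ((Gamma K : ConvexBody (E n p)) : Set (E n p)) c = HH K c :=
  supp_domBody (HH K) (fun t ht c => HH_smul K ht c) (HH_add_le K) (HH_neg K) (HH_nonneg K) c

lemma supp_coe_add (A B : ConvexBody (E n p)) (c : E n p) :
    supp ((A + B : ConvexBody (E n p)) : Set (E n p)) c
      = supp (A : Set (E n p)) c + supp (B : Set (E n p)) c := by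
  rw [ConvexBody.coe_add]
  exact supp_add A.nonempty B.nonempty A.isCompact B.isCompact c

/-- uniqueness against Gamma -/
lemma eq_Gamma_of_supp (K : ConvexBody (Rn n)) (B : ConvexBody (E n p))
    (h : ∀ c, supp (B : Set (E n p)) c = HH K c) : B = Gamma K := by
  apply ConvexBody.ext
  exact eq_of_supp_eq B.convex B.isClosed B.nonempty B.isCompact
    (Gamma K).convex (Gamma K).isClosed (Gamma K).nonempty (Gamma K).isCompact
    (fun c => by rw [h c, supp_Gamma])

/-- valuation property of HH -/
lemma HH_val (K L M N : ConvexBody (Rn n))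
    (hM : (M : Set (Rn n)) = (K : Set (Rn n)) ∪ (L : Set (Rn n)))
    (hN : (N : Set (Rn n)) = (K : Set (Rn n)) ∩ (L : Set (Rn n))) (c : E n p) :
    HH M c + HH N c = HH K c + HH L c := by
  have hKm : MeasurableSet (K : Set (Rn n)) := K.isClosed.measurableSet
  have hLm : MeasurableSet (L : Set (Rn n)) := L.isClosed.measurableSet
  have hdiffm : MeasurableSet ((L : Set (Rn n)) \ K) := hLm.diff hKm
  have hdisj1 : Disjoint (K : Set (Rn n)) ((L : Set (Rn n)) \ K) :=
    Set.disjoint_left.2 fun x hx1 hx2 => hx2.2 hx1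
  have hint1 : IntegrableOn (fun x => |polyEval c x|) (K : Set (Rn n)) :=
    integrableOn_abs_polyEval c K.isCompact
  have hint2 : IntegrableOn (fun x => |polyEval c x|) ((L : Set (Rn n)) \ K) :=
    (integrableOn_abs_polyEval c L.isCompact).mono_set Set.diff_subset
  have h1 : HH M c = HH K c + ∫ x in ((L : Set (Rn n)) \ K), |polyEval c x| := by
    rw [HH, hM, Set.union_diff_self.symm, setIntegral_union hdisj1 hdiffm hint1 hint2]
    rfl
  have h2 : HH L c = HH N c + ∫ x in ((L : Set (Rn n)) \ K), |polyEval c x| := by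
    have hsplit : (L : Set (Rn n)) = ((L : Set (Rn n)) ∩ K) ∪ ((L : Set (Rn n)) \ K) :=
      (Set.inter_union_diff _ _).symm
    rw [HH]
    conv_lhs => rw [hsplit]
    rw [setIntegral_union (Set.disjoint_left.2 fun x hx1 hx2 => hx2.2 hx1.2) hdiffm
      (hint1.mono_set Set.inter_subset_right) hint2, HH, hN, Set.inter_comm]
  linarith

lemma Gamma_val : IsMinkowskiVal (Gamma (n := n) (p := p)) := by
  intro K L M N hM hN
  have h1 : ∀ c, supp ((Gamma M + Gamma N : ConvexBody (E n p)) : Set (E n p)) c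
      = supp ((Gamma K + Gamma L : ConvexBody (E n p)) : Set (E n p)) c := by
    intro c
    rw [supp_coe_add, supp_coe_add, supp_Gamma, supp_Gamma, supp_Gamma, supp_Gamma]
    exact HH_val K L M N hM hN c
  apply ConvexBody.ext
  exact eq_of_supp_eq ((Gamma M + Gamma N).convex) ((Gamma M + Gamma N).isClosed)
    ((Gamma M + Gamma N).nonempty) ((Gamma M + Gamma N).isCompact)
    ((Gamma K + Gamma L).convex) ((Gamma K + Gamma L).isClosed)
    ((Gamma K + Gamma L).nonempty) ((Gamma K + Gamma L).isCompact) h1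

lemma Gamma_continuous : Continuous (Gamma (n := n) (p := p)) := by
  rw [Metric.continuous_iff]
  intro K ε hε
  obtain ⟨δ, hδ, hprop⟩ := HH_close (p := p) K (half_pos hε)
  refine ⟨δ, hδ, fun L hL => ?_⟩
  have hbound := hprop L hL.le
  have hd : dist (Gamma (p := p) L) (Gamma (p := p) K) ≤ ε/2 := by
    rw [← ConvexBody.hausdorffDist_coe]
    refine Metric.hausdorffDist_le_of_mem_dist (half_pos hε).le ?_ ?_
    · refine exists_close (Gamma K).convex (Gamma K).nonempty
        (Gamma (p := p) L).isCompact (Gamma K).isCompact (half_pos hε).le (fun c => ?_)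
      rw [supp_Gamma, supp_Gamma]
      have := hbound c
      rw [abs_le] at this
      linarith [this.2]
    · refine exists_close (Gamma L).convex (Gamma L).nonempty
        (Gamma (p := p) K).isCompact (Gamma L).isCompact (half_pos hε).le (fun c => ?_)
      rw [supp_Gamma, supp_Gamma]
      have := hbound c
      rw [abs_le] at this
      linarith [this.1]
  linarith [half_lt_self hε]

lemma Gamma_equivariant (T : Matrix.SpecialLinearGroup (Fin n) ℝ) (K : ConvexBody (Rn n))
    (c c' : E n p) (h : ∀ x : Rn n, polyEval c' x = polyEval c (stdRep T x)) :
    supp ((Gamma (K.lmap (stdRep T)) : ConvexBody (E n p)) : Set (E n p)) c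
      = supp ((Gamma K : ConvexBody (E n p)) : Set (E n p)) c' := by
  rw [supp_Gamma, supp_Gamma]
  show (∫ x in ((K.lmap (stdRep T) : ConvexBody (Rn n)) : Set (Rn n)), |polyEval c x|) = HH K c'
  have hset : ((K.lmap (stdRep T) : ConvexBody (Rn n)) : Set (Rn n))
      = (stdRep T) '' (K : Set (Rn n)) := rfl
  rw [hset, setIntegral_image_stdRep T (fun y => |polyEval c y|) (K : Set (Rn n))]
  unfold HH
  congr 1
  ext x
  rw [h x]


end Stmt16

/-- **The `L^p`-centroid-type body `Γ_p` (Section 8.3).** For every convex body `K ⊆ ℝⁿ`,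
the function `H_K(φ) = ∫_K |φ(x)| dx` on the space `P_p` of homogeneous polynomials of degree
`p` is sublinear, hence the support function of a unique convex body `Γ_p K` in the dual
space `P_p^*`; `Γ_p` is a continuous Minkowski valuation and is `SL_n(ℝ)`-equivariant for the
dual action `(ρ^*(T)λ)(φ) = λ(φ ∘ T)`. -/
theorem stmt16 {n p : ℕ} (hn : 2 ≤ n) (hp : 1 ≤ p) :
    (∀ (K : ConvexBody (Rn n)),
      (∀ t : ℝ, 0 ≤ t → ∀ c : Sym (Fin n) p → ℝ,
        (∫ x in (K : Set (Rn n)), |polyEval (t • c) x|) =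
          t * ∫ x in (K : Set (Rn n)), |polyEval c x|) ∧
      (∀ c₁ c₂ : Sym (Fin n) p → ℝ,
        (∫ x in (K : Set (Rn n)), |polyEval (c₁ + c₂) x|) ≤
          (∫ x in (K : Set (Rn n)), |polyEval c₁ x|) +
            ∫ x in (K : Set (Rn n)), |polyEval c₂ x|)) ∧
    ∃ Γ : ConvexBody (Rn n) → ConvexBody (Sym (Fin n) p → ℝ),
      (∀ (K : ConvexBody (Rn n)) (c : Sym (Fin n) p → ℝ),
        sSup ((fun lam => polyPair lam c) '' (Γ K : Set (Sym (Fin n) p → ℝ))) =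
          ∫ x in (K : Set (Rn n)), |polyEval c x|) ∧
      (∀ (K : ConvexBody (Rn n)) (B : ConvexBody (Sym (Fin n) p → ℝ)),
        (∀ c : Sym (Fin n) p → ℝ,
          sSup ((fun lam => polyPair lam c) '' (B : Set (Sym (Fin n) p → ℝ))) =
            ∫ x in (K : Set (Rn n)), |polyEval c x|) → B = Γ K) ∧
      Continuous Γ ∧ IsMinkowskiVal Γ ∧
      (∀ (T : Matrix.SpecialLinearGroup (Fin n) ℝ) (K : ConvexBody (Rn n))
        (c c' : Sym (Fin n) p → ℝ),
        (∀ x : Rn n, polyEval c' x = polyEval c (stdRep T x)) →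
        sSup ((fun lam => polyPair lam c) ''
            (Γ (K.lmap (stdRep T)) : Set (Sym (Fin n) p → ℝ))) =
          sSup ((fun lam => polyPair lam c') '' (Γ K : Set (Sym (Fin n) p → ℝ)))) := by
  constructor
  · intro K
    exact ⟨fun t ht c => Stmt16.HH_smul K ht c, Stmt16.HH_add_le K⟩
  · exact ⟨Stmt16.Gamma, fun K c => Stmt16.supp_Gamma K c,
      fun K B hB => Stmt16.eq_Gamma_of_supp K B hB,
      Stmt16.Gamma_continuous, Stmt16.Gamma_val,
      fun T K c c' h => Stmt16.Gamma_equivariant T K c c' h⟩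
end
end
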